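/- arXiv:1801.06235 — 11 statements merged into one kernel-verified Lean document; each statement's English description precedes it below -/
import Mathlib

section
/- If X is a real normed space whose Hamel dimension over ℝ is countably infinite, then there exists a sequence (x_n)_{n∈ℕ} in X with ∑_{n=1}^∞ ‖x_n‖ < ∞ whose sequence of partial sums does not converge in X; in particular, X is not complete. -/
open Filter Topology

/-!
A countable Hamel basis writes the space as a countable union of finite-dimensional, hence
closed, subspaces. If the space were complete, Baire's theorem would give one of them nonempty
interior, so it would be the whole space, which is then finite-dimensional. A normed space in
which every absolutely convergent series converges is complete, which yields the series.
-/

theorem Submodule.exists_eq_top_of_iUnion_isClosed {R M ι : Type*} [Ring R] [TopologicalSpace R]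
    [TopologicalSpace M] [AddCommGroup M] [ContinuousAdd M] [Module R M] [ContinuousSMul R M]
    [NeBot (𝓝[{x : R | IsUnit x}] 0)] [BaireSpace M] [Countable ι] (F : ι → Submodule R M)
    (hF : ∀ i, IsClosed (F i : Set M)) (hcover : ⋃ i, (F i : Set M) = Set.univ) :
    ∃ i, F i = ⊤ :=
  (nonempty_interior_of_iUnion_of_closed hF hcover).imp fun i ↦
    Submodule.eq_top_of_nonempty_interior' (F i)

theorem Module.Basis.iUnion_span_image_finset {R M ι : Type*} [Semiring R] [AddCommMonoid M]
    [Module R M] (b : Basis ι R M) :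
    ⋃ s : Finset ι, (Submodule.span R (b '' s) : Set M) = Set.univ :=
  Set.eq_univ_of_forall fun x ↦ Set.mem_iUnion.2 ⟨_, b.mem_span_repr_support x⟩

theorem FiniteDimensional.of_rank_le_aleph0 {𝕜 E : Type*} [NontriviallyNormedField 𝕜]
    [CompleteSpace 𝕜] [NormedAddCommGroup E] [NormedSpace 𝕜 E] [CompleteSpace E]
    (h : Module.rank 𝕜 E ≤ Cardinal.aleph0) : FiniteDimensional 𝕜 E := by
  let b := Module.Free.chooseBasis 𝕜 E
  have : Countable (Module.Free.ChooseBasisIndex 𝕜 E) :=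
    Cardinal.mk_le_aleph0_iff.1 (b.mk_eq_rank''.trans_le h)
  have hfin (s : Finset _) : FiniteDimensional 𝕜 (Submodule.span 𝕜 (b '' s)) :=
    FiniteDimensional.span_of_finite 𝕜 (s.finite_toSet.image b)
  obtain ⟨s, hs⟩ := Submodule.exists_eq_top_of_iUnion_isClosed _
    (fun s ↦ Submodule.closed_of_finiteDimensional _) b.iUnion_span_image_finset
  have : FiniteDimensional 𝕜 (⊤ : Submodule 𝕜 E) := hs ▸ hfin s
  exact Submodule.topEquiv.finiteDimensional

theorem not_completeSpace_of_rank_eq_aleph0 {𝕜 E : Type*} [NontriviallyNormedField 𝕜]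
    [CompleteSpace 𝕜] [NormedAddCommGroup E] [NormedSpace 𝕜 E]
    (h : Module.rank 𝕜 E = Cardinal.aleph0) : ¬ CompleteSpace E := fun _ ↦
  have := FiniteDimensional.of_rank_le_aleph0 h.le
  (Module.rank_lt_aleph0 𝕜 E).ne h

/-- If `X` is a real normed space whose Hamel dimension over `ℝ` is countably infinite,
then there exists an absolutely convergent series in `X` which does not converge; in
particular `X` is not complete. -/
theorem stmt2 (X : Type*) [NormedAddCommGroup X] [NormedSpace ℝ X]
    (h : Module.rank ℝ X = Cardinal.aleph0) :
    (∃ x : ℕ → X, (Summable fun n => ‖x n‖) ∧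
      ¬ ∃ l : X, Tendsto (fun m => ∑ n ∈ Finset.range m, x n) atTop (𝓝 l)) ∧
    ¬ CompleteSpace X := by
  have hX : ¬ CompleteSpace X := not_completeSpace_of_rank_eq_aleph0 h
  refine ⟨?_, hX⟩
  by_contra! hseries
  exact hX (NormedAddCommGroup.completeSpace_of_summable_imp_tendsto hseries)
end

section
/- Let X be a Hausdorff, first-countable, locally convex topological vector space over ℝ such that every nonempty closed, von Neumann bounded, convex subset of X has an extreme point. Then the Hamel dimension of X over ℝ is not countably infinite. -/
/-!
Linear functionals on finite-dimensional subspaces extend continuously, so a Hamel basis `(e n)`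
of a Hausdorff locally convex space admits continuous `f n` with `f n (e k) = δₙₖ` for `k ≤ n`;
correcting `e` triangularly against these yields a basis whose coordinate functionals are
exactly the `f n`, hence continuous. First countability lets us rescale it so that `b n → 0`.
In these coordinates the box `{x | ∀ n, |xₙ| ≤ 2⁻ⁿ}` is closed and convex, and it is bounded since
its points are absolutely convex combinations of the bounded set `{0} ∪ {b n}`, up to a fixed
factor. But a point `x` of the box has only finitely many nonzero coordinates, so for some `m`
with `xₘ = 0` it is the midpoint of `x ± 2⁻ᵐ • b m`, both in the box: no extreme points.
-/

open Filter Topology Set Submodule Module Pointwise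

section Biorthogonalize

variable {R M : Type*} [CommRing R] [AddCommGroup M] [Module R M]

noncomputable def biorthogonalize (f : ℕ → Dual R M) (e : ℕ → M) : ℕ → M
  | n => e n - ∑ k : Fin n, f k (e n) • biorthogonalize f e k
decreasing_by exact k.isLt

lemma biorthogonalize_apply (f : ℕ → Dual R M) (e : ℕ → M) (n : ℕ) :
    biorthogonalize f e n = e n - ∑ k : Fin n, f k (e n) • biorthogonalize f e k := by
  rw [biorthogonalize]

variable {f : ℕ → Dual R M} {e : ℕ → M}

lemma dual_apply_biorthogonalize (hf1 : ∀ n, f n (e n) = 1)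
    (hf0 : ∀ n k, k < n → f n (e k) = 0) (j k : ℕ) :
    f j (biorthogonalize f e k) = if j = k then 1 else 0 := by
  induction k using Nat.strong_induction_on generalizing j with
  | _ k ih =>
    have hsum : ∑ i : Fin k, f i (e k) * f j (biorthogonalize f e i) =
        if j < k then f j (e k) else 0 := by
      simp only [fun i : Fin k => ih i i.isLt j, mul_ite, mul_one, mul_zero]
      rw [Fin.sum_univ_eq_sum_range (fun i => if j = i then f i (e k) else 0),
        Finset.sum_ite_eq]
      simp
    rw [biorthogonalize_apply, map_sub, map_sum]
    simp only [map_smul, smul_eq_mul, hsum]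
    rcases lt_trichotomy j k with hjk | rfl | hkj
    · simp [hjk, hjk.ne]
    · simp [hf1]
    · simp [hf0 j k hkj, hkj.ne', hkj.not_gt]

lemma range_subset_span_biorthogonalize :
    range e ⊆ span R (range (biorthogonalize f e)) := by
  rintro - ⟨n, rfl⟩
  have he : e n = biorthogonalize f e n + ∑ k : Fin n, f k (e n) • biorthogonalize f e k := by
    rw [biorthogonalize_apply]; abel
  rw [he]
  exact add_mem (subset_span ⟨n, rfl⟩)
    (sum_mem fun k _ => smul_mem _ _ (subset_span ⟨k, rfl⟩))

theorem Module.Basis.exists_basis_coord_eq (e : Basis ℕ R M)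
    (hf1 : ∀ n, f n (e n) = 1) (hf0 : ∀ n k, k < n → f n (e k) = 0) :
    ∃ b : Basis ℕ R M, ∀ n, b.coord n = f n := by
  have hdual := dual_apply_biorthogonalize hf1 hf0
  have hli : LinearIndependent R (biorthogonalize f e) :=
    .of_pairwise_dual_eq_zero_one _ f (fun j k hjk => by simp [hdual, hjk]) (by simp [hdual])
  have hsp : ⊤ ≤ span R (range (biorthogonalize f e)) := by
    rw [← e.span_eq, span_le]
    exact range_subset_span_biorthogonalize
  refine ⟨.mk hli hsp, fun n => (Basis.mk hli hsp).ext fun k => ?_⟩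
  rw [Basis.mk_apply, Basis.mk_coord_apply, hdual]
  simp [eq_comm]

end Biorthogonalize

section Continuous

variable {K V : Type*} [Field K] [TopologicalSpace K] [IsTopologicalRing K] [AddCommGroup V]
  [TopologicalSpace V] [Module K V] [SeparatingDual K V]

lemma Submodule.exists_strongDual_extension (W : Submodule K V) [FiniteDimensional K W]
    (φ : Dual K W) : ∃ f : StrongDual K V, ∀ w : W, f w = φ w := by
  obtain ⟨f, hf⟩ :=
    (SeparatingDual.dualMap_surjective_iff (f := W.subtype)).2 W.injective_subtype φ
  exact ⟨f, fun w => LinearMap.congr_fun hf w⟩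

theorem Module.Basis.exists_basis_continuous_coord (e : Basis ℕ K V) :
    ∃ b : Basis ℕ K V, ∀ n, Continuous (b.coord n) := by
  have hext : ∀ n, ∃ f : StrongDual K V, ∀ k ≤ n, f (e k) = e.coord n (e k) := by
    intro n
    have := FiniteDimensional.span_of_finite K ((finite_Iic n).image e)
    obtain ⟨f, hf⟩ :=
      (span K (e '' Iic n)).exists_strongDual_extension ((e.coord n).domRestrict _)
    exact ⟨f, fun k hk => hf ⟨e k, subset_span ⟨k, hk, rfl⟩⟩⟩
  choose f hf using hext
  obtain ⟨b, hb⟩ := e.exists_basis_coord_eq (f := fun n => (f n : Dual K V))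
    (fun n => by simp [hf n n le_rfl]) (fun n k hkn => by simp [hf n k hkn.le, hkn.ne'])
  exact ⟨b, fun n => by rw [hb n]; exact (f n).continuous⟩

variable {X : Type*} [AddCommGroup X] [Module ℝ X] [TopologicalSpace X] [ContinuousSMul ℝ X]

lemma exists_smul_tendsto_zero [FirstCountableTopology X] (v : ℕ → X) :
    ∃ c : ℕ → ℝ, (∀ n, c n ≠ 0) ∧ Tendsto (fun n => c n • v n) atTop (𝓝 0) := by
  obtain ⟨V, hV⟩ := (𝓝 (0 : X)).exists_antitone_basis
  have hsmall : ∀ n, ∃ c : ℝ, c ≠ 0 ∧ c • v n ∈ V n := by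
    intro n
    have hcont : Continuous fun t : ℝ => t • v n := continuous_id.smul continuous_const
    have hlim : Tendsto (fun t : ℝ => t • v n) (𝓝[≠] 0) (𝓝 0) := by
      simpa using (hcont.tendsto 0).mono_left nhdsWithin_le_nhds
    exact (eventually_mem_nhdsWithin.and (hlim.eventually_mem (hV.mem n))).exists
  choose c hc0 hcV using hsmall
  exact ⟨c, hc0, hV.tendsto hcV⟩

theorem Module.Basis.exists_basis_continuous_coord_tendsto_zero [IsTopologicalAddGroup X]
    [LocallyConvexSpace ℝ X] [T2Space X] [FirstCountableTopology X] (e : Basis ℕ ℝ X) :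
    ∃ b : Basis ℕ ℝ X, (∀ n, Continuous (b.coord n)) ∧ Tendsto b atTop (𝓝 0) := by
  obtain ⟨b, hb⟩ := e.exists_basis_continuous_coord
  obtain ⟨c, hc0, hc⟩ := exists_smul_tendsto_zero b
  have hunit : ∀ n, IsUnit (c n) := fun n => (hc0 n).isUnit
  refine ⟨b.isUnitSMul hunit, fun n => ?_,
    hc.congr fun n => (b.isUnitSMul_apply hunit n).symm⟩
  rw [Basis.isUnitSMul, Basis.coord_unitsSMul]
  exact (hb n).const_smul _

end Continuous

section AbsConvex

variable {E : Type*} [AddCommGroup E] [Module ℝ E]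

lemma Convex.sum_mem_sum_smul {U : Set E} (hU : Convex ℝ U) (h0 : 0 ∈ U) {ι : Type*}
    (s : Finset ι) {t : ι → ℝ} {z : ι → E} (ht : ∀ i ∈ s, 0 ≤ t i)
    (hz : ∀ i ∈ s, z i ∈ t i • U) : ∑ i ∈ s, z i ∈ (∑ i ∈ s, t i) • U := by
  classical
  induction s using Finset.induction_on with
  | empty => simpa using zero_mem_smul_set h0
  | insert i s hi ih =>
    rw [Finset.sum_insert hi, Finset.sum_insert hi,
      hU.add_smul (ht i (Finset.mem_insert_self i s))
        (Finset.sum_nonneg fun j hj => ht j (Finset.mem_insert_of_mem hj))]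
    exact add_mem_add (hz i (Finset.mem_insert_self i s))
      (ih (fun j hj => ht j (Finset.mem_insert_of_mem hj))
        (fun j hj => hz j (Finset.mem_insert_of_mem hj)))

lemma AbsConvex.sum_smul_mem {t : Set E} (ht : AbsConvex ℝ t) (h0 : 0 ∈ t) {ι : Type*}
    {s : Finset ι} {a : ι → ℝ} {v : ι → E} (hv : ∀ i ∈ s, v i ∈ t)
    (ha : ∑ i ∈ s, |a i| ≤ 1) : ∑ i ∈ s, a i • v i ∈ t := by
  have hsum := ht.2.sum_mem_sum_smul h0 s (t := fun i => |a i|) (fun i _ => abs_nonneg _)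
    fun i hi => ht.1.smul_mono (a := a i) (by simp) (smul_mem_smul_set (hv i hi))
  have hle : ‖∑ i ∈ s, |a i|‖ ≤ ‖(1 : ℝ)‖ := by
    rwa [Real.norm_of_nonneg (Finset.sum_nonneg fun i _ => abs_nonneg _), norm_one]
  simpa using ht.1.smul_mono hle hsum

lemma Bornology.IsVonNBounded.absConvexHull [TopologicalSpace E] [IsTopologicalAddGroup E]
    [ContinuousSMul ℝ E] [LocallyConvexSpace ℝ E] {s : Set E} (hs : IsVonNBounded ℝ s) :
    IsVonNBounded ℝ (absConvexHull ℝ s) := by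
  rw [(nhds_hasBasis_absConvex ℝ E).isVonNBounded_iff]
  rintro U ⟨hU, hUabs⟩
  exact Eventually.mono (hs hU) fun a ha =>
    absConvexHull_min ha ⟨hUabs.1.smul a, hUabs.2.smul a⟩

end AbsConvex

namespace Module.Basis

variable {ι X : Type*} [AddCommGroup X] [Module ℝ X] (b : Basis ι ℝ X) (r : ι → ℝ)

def coordBox : Set X := {x | ∀ i, |b.repr x i| ≤ r i}

lemma coordBox_eq_iInter : b.coordBox r = ⋂ i, b.coord i ⁻¹' Icc (-r i) (r i) := by
  ext x
  simp [coordBox, abs_le]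

lemma convex_coordBox : Convex ℝ (b.coordBox r) := by
  rw [coordBox_eq_iInter]
  exact convex_iInter fun i => (convex_Icc _ _).linear_preimage _

lemma isClosed_coordBox [TopologicalSpace X] (hb : ∀ i, Continuous (b.coord i)) :
    IsClosed (b.coordBox r) := by
  rw [coordBox_eq_iInter]
  exact isClosed_iInter fun i => isClosed_Icc.preimage (hb i)

lemma zero_mem_coordBox (hr : ∀ i, 0 ≤ r i) : (0 : X) ∈ b.coordBox r :=
  fun i => by simpa using hr i

lemma add_smul_mem_coordBox {x : X} (hx : x ∈ b.coordBox r) {i : ι} (hxi : b.repr x i = 0)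
    {t : ℝ} (ht : |t| ≤ r i) : x + t • b i ∈ b.coordBox r := by
  intro j
  rcases eq_or_ne i j with rfl | hij
  · simpa [hxi] using ht
  · simpa [Finsupp.single_apply, hij] using hx j

lemma extremePoints_coordBox [Infinite ι] (hr : ∀ i, 0 < r i) :
    extremePoints ℝ (b.coordBox r) = ∅ := by
  refine eq_empty_of_forall_notMem fun p hp => ?_
  rw [mem_extremePoints] at hp
  obtain ⟨i, hi⟩ := Infinite.exists_notMem_finset (b.repr p).support
  have hpi : b.repr p i = 0 := Finsupp.notMem_support_iff.1 hi
  have hri : |r i| ≤ r i := (abs_of_pos (hr i)).le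
  have hplus := b.add_smul_mem_coordBox r hp.1 hpi hri
  have hminus := b.add_smul_mem_coordBox r hp.1 hpi ((abs_neg (r i)).trans_le hri)
  have hmid : p ∈ openSegment ℝ (p + r i • b i) (p + (-r i) • b i) :=
    ⟨1 / 2, 1 / 2, by norm_num, by norm_num, by norm_num, by module⟩
  have heq := (hp.2 _ hplus _ hminus hmid).1
  exact smul_ne_zero (hr i).ne' (b.ne_zero i) (by simpa using heq)

lemma isVonNBounded_coordBox [TopologicalSpace X] [IsTopologicalAddGroup X] [ContinuousSMul ℝ X]
    [LocallyConvexSpace ℝ X] (hb : Bornology.IsVonNBounded ℝ (range b)) (hr0 : ∀ i, 0 ≤ r i)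
    (hr : Summable r) : Bornology.IsVonNBounded ℝ (b.coordBox r) := by
  set R := ∑' i, r i + 1
  have hR : 0 < R := add_pos_of_nonneg_of_pos (tsum_nonneg hr0) one_pos
  have hK := (hb.insert 0).absConvexHull
  refine (hK.image (R • ContinuousLinearMap.id ℝ X)).subset fun x hx => ?_
  refine ⟨R⁻¹ • x, ?_, by simp [smul_smul, hR.ne']⟩
  have hx_sum : R⁻¹ • x = ∑ i ∈ (b.repr x).support, (R⁻¹ * b.repr x i) • b i := by
    conv_lhs => rw [← b.linearCombination_repr x]
    simp [Finsupp.linearCombination_apply, Finsupp.sum, Finset.smul_sum, smul_smul]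
  rw [hx_sum]
  refine absConvex_absConvexHull.sum_smul_mem (subset_absConvexHull (mem_insert _ _))
    (fun i _ => subset_absConvexHull (mem_insert_of_mem _ (mem_range_self i))) ?_
  calc ∑ i ∈ (b.repr x).support, |R⁻¹ * b.repr x i|
      = R⁻¹ * ∑ i ∈ (b.repr x).support, |b.repr x i| := by
        simp [abs_mul, abs_of_pos hR, Finset.mul_sum]
    _ ≤ R⁻¹ * ∑' i, r i := by
        gcongr
        exact (Finset.sum_le_sum fun i _ => hx i).trans (hr.sum_le_tsum _ fun i _ => hr0 i)
    _ ≤ 1 := by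
        rw [inv_mul_le_iff₀ hR]
        linarith

end Module.Basis

lemma Module.nonempty_basis_nat_of_rank_eq_aleph0 {K V : Type*} [DivisionRing K] [AddCommGroup V]
    [Module K V] (h : Module.rank K V = Cardinal.aleph0) : Nonempty (Basis ℕ K V) := by
  let b := Basis.ofVectorSpace K V
  obtain ⟨_⟩ := Cardinal.denumerable_iff.2 (b.mk_eq_rank''.trans h)
  exact ⟨b.reindex (Denumerable.eqv _)⟩

/-- Let `X` be a Hausdorff, first-countable, locally convex topological vector space over
`ℝ` such that every nonempty closed, von Neumann bounded, convex subset of `X` has an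
extreme point. Then the Hamel dimension of `X` over `ℝ` is not countably infinite. -/
theorem stmt3 (X : Type*) [AddCommGroup X] [Module ℝ X] [TopologicalSpace X]
    [IsTopologicalAddGroup X] [ContinuousSMul ℝ X] [LocallyConvexSpace ℝ X]
    [T2Space X] [FirstCountableTopology X]
    (h : ∀ C : Set X, C.Nonempty → IsClosed C → Bornology.IsVonNBounded ℝ C →
      Convex ℝ C → (Set.extremePoints ℝ C).Nonempty) :
    Module.rank ℝ X ≠ Cardinal.aleph0 := by
  intro hrank
  obtain ⟨e⟩ := Module.nonempty_basis_nat_of_rank_eq_aleph0 hrank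
  obtain ⟨b, hb_cont, hb_lim⟩ := e.exists_basis_continuous_coord_tendsto_zero
  set r : ℕ → ℝ := fun n => (1 / 2) ^ n
  have hr : ∀ n, 0 < r n := fun n => by positivity
  obtain ⟨p, hp⟩ := h (b.coordBox r) ⟨0, b.zero_mem_coordBox r fun n => (hr n).le⟩
    (b.isClosed_coordBox r hb_cont)
    (b.isVonNBounded_coordBox r (hb_lim.isVonNBounded_range ℝ) (fun n => (hr n).le)
      summable_geometric_two)
    (b.convex_coordBox r)
  simp [b.extremePoints_coordBox r hr] at hp
end

section
/- Let X be a real Banach space and (x_n)_{n∈ℕ} a sequence in X. Then the summing multiplier space S(∑x_n) := {(a_n) ∈ ℓ∞ : the series ∑_n a_n x_n converges in X} is not equal to c, the set of convergent real sequences. In other words, no series in a Banach space has c as its summing multiplier space. -/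
/-!
If `S = c`, the constant multiplier `1` lies in `S`, so `∑ xₙ` converges, with tails
`Rₙ = s - ∑_{i<n} xᵢ → 0`. Abel summation gives
`∑_{n<m} aₙ xₙ = a₀ R₀ - aₘ Rₘ + ∑_{n<m} (aₙ₊₁ - aₙ) Rₙ₊₁`, so every bounded `a` with
`∑ |aₙ₊₁ - aₙ| ‖Rₙ₊₁‖ < ∞` is a multiplier. Picking indices `φ k` with `‖R_{φ k + 1}‖ ≤ 2⁻ᵏ`,
the `0`-`1` sequence that flips exactly at the `φ k` is such a multiplier, yet it diverges.
-/

open Filter Topology Finset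

theorem sum_range_smul_sub_succ {R M : Type*} [Ring R] [AddCommGroup M] [Module R M]
    (a : ℕ → R) (r : ℕ → M) (m : ℕ) :
    ∑ i ∈ range m, a i • (r i - r (i + 1)) =
      a 0 • r 0 - a m • r m + ∑ i ∈ range m, (a (i + 1) - a i) • r (i + 1) := by
  induction m with
  | zero => simp
  | succ m ih =>
    rw [sum_range_succ, ih, sum_range_succ, smul_sub, sub_smul]
    abel

theorem exists_tendsto_sum_smul_of_summable_variation {𝕜 X : Type*} [NormedField 𝕜]
    [NormedAddCommGroup X] [NormedSpace 𝕜 X] [CompleteSpace X] {x : ℕ → X} {s : X}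
    (hx : Tendsto (fun m => ∑ n ∈ range m, x n) atTop (𝓝 s)) {a : ℕ → 𝕜}
    (ha : IsBoundedUnder (· ≤ ·) atTop (norm ∘ a))
    (hvar : Summable fun n => ‖a (n + 1) - a n‖ * ‖s - ∑ i ∈ range (n + 1), x i‖) :
    ∃ t, Tendsto (fun m => ∑ n ∈ range m, a n • x n) atTop (𝓝 t) := by
  set tail : ℕ → X := fun n => s - ∑ i ∈ range n, x i
  have htail : Tendsto tail atTop (𝓝 0) := by
    simpa using (tendsto_const_nhds (x := s)).sub hx
  have hx_tail : ∀ n, x n = tail n - tail (n + 1) := fun n => by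
    simp only [tail, sum_range_succ]
    abel
  have hsum : Summable fun n => (a (n + 1) - a n) • tail (n + 1) :=
    Summable.of_norm (by simpa only [norm_smul] using hvar)
  refine ⟨a 0 • tail 0 + ∑' n, (a (n + 1) - a n) • tail (n + 1), ?_⟩
  simp_rw [hx_tail, sum_range_smul_sub_succ]
  simpa using
    (tendsto_const_nhds.sub (ha.smul_tendsto_zero htail)).add hsum.hasSum.tendsto_sum_nat

def alternateBlocks (φ : ℕ → ℕ) : Set ℕ :=
  ⋃ j, Set.Ioc (φ (2 * j)) (φ (2 * j + 1))

section AlternateBlocks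

variable {φ : ℕ → ℕ}

theorem mem_alternateBlocks {n : ℕ} :
    n ∈ alternateBlocks φ ↔ ∃ j, φ (2 * j) < n ∧ n ≤ φ (2 * j + 1) := by
  simp [alternateBlocks]

theorem succ_mem_alternateBlocks_iff {n : ℕ} (hn : n ∉ Set.range φ) :
    n + 1 ∈ alternateBlocks φ ↔ n ∈ alternateBlocks φ := by
  have hne : ∀ k, φ k ≠ n := fun k hk => hn ⟨k, hk⟩
  simp only [mem_alternateBlocks]
  refine exists_congr fun j => ?_
  have := hne (2 * j)
  have := hne (2 * j + 1)
  omega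

theorem StrictMono.odd_mem_alternateBlocks (hφ : StrictMono φ) (k : ℕ) :
    φ (2 * k + 1) ∈ alternateBlocks φ :=
  mem_alternateBlocks.2 ⟨k, hφ (Nat.lt_succ_self _), le_rfl⟩

theorem StrictMono.even_notMem_alternateBlocks (hφ : StrictMono φ) (k : ℕ) :
    φ (2 * k) ∉ alternateBlocks φ := by
  rintro ⟨-, ⟨j, rfl⟩, hj₁, hj₂⟩
  have := hφ.lt_iff_lt.1 hj₁
  have := hφ.le_iff_le.1 hj₂
  omega

theorem StrictMono.not_tendsto_indicator_alternateBlocks (hφ : StrictMono φ) (l : ℝ) :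
    ¬ Tendsto ((alternateBlocks φ).indicator 1) atTop (𝓝 l) := by
  intro hl
  have hodd : Tendsto (fun k => φ (2 * k + 1)) atTop atTop :=
    (hφ.comp fun i j h => by omega).tendsto_atTop
  have heven : Tendsto (fun k => φ (2 * k)) atTop atTop :=
    (hφ.comp fun i j h => by omega).tendsto_atTop
  have h1 : Tendsto (fun k => (alternateBlocks φ).indicator (1 : ℕ → ℝ) (φ (2 * k + 1)))
      atTop (𝓝 1) := by
    simp [hφ.odd_mem_alternateBlocks]
  have h0 : Tendsto (fun k => (alternateBlocks φ).indicator (1 : ℕ → ℝ) (φ (2 * k)))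
      atTop (𝓝 0) := by
    simp [hφ.even_notMem_alternateBlocks]
  exact one_ne_zero ((tendsto_nhds_unique h1 (hl.comp hodd)).trans
    (tendsto_nhds_unique h0 (hl.comp heven)).symm)

end AlternateBlocks

theorem norm_indicator_one_sub_le (s : Set ℕ) (m n : ℕ) :
    ‖s.indicator (1 : ℕ → ℝ) m - s.indicator 1 n‖ ≤ 1 := by
  unfold Set.indicator
  split_ifs <;> norm_num

theorem exists_not_tendsto_summable_variation {E : Type*} [SeminormedAddCommGroup E]
    {r : ℕ → E} (hr : Tendsto r atTop (𝓝 0)) :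
    ∃ a : ℕ → ℝ, (∀ n, ‖a n‖ ≤ 1) ∧ (∀ l, ¬ Tendsto a atTop (𝓝 l)) ∧
      Summable fun n => ‖a (n + 1) - a n‖ * ‖r n‖ := by
  obtain ⟨φ, hφ, hφr⟩ := extraction_forall_of_eventually (P := fun k n => ‖r n‖ ≤ (1 / 2 : ℝ) ^ k)
    fun k => (tendsto_zero_iff_norm_tendsto_zero.1 hr).eventually (ge_mem_nhds (by positivity))
  set a := (alternateBlocks φ).indicator (1 : ℕ → ℝ)
  refine ⟨a, fun n => (norm_indicator_le_norm_self _ _).trans_eq norm_one,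
    hφ.not_tendsto_indicator_alternateBlocks, ?_⟩
  have hvanish : ∀ n ∉ Set.range φ, ‖a (n + 1) - a n‖ * ‖r n‖ = 0 := fun n hn => by
    have : a (n + 1) = a n := by
      classical
      simp only [a, Set.indicator_apply, succ_mem_alternateBlocks_iff hn, Pi.one_apply]
    rw [this, sub_self, norm_zero, zero_mul]
  refine (hφ.injective.summable_iff hvanish).1 <|
    summable_geometric_two.of_nonneg_of_le (fun _ => by dsimp; positivity) fun k => ?_
  calc ‖a (φ k + 1) - a (φ k)‖ * ‖r (φ k)‖ ≤ 1 * (1 / 2) ^ k :=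
        mul_le_mul (norm_indicator_one_sub_le _ _ _) (hφr k) (norm_nonneg _) zero_le_one
    _ = (1 / 2) ^ k := one_mul _

/-- For a real Banach space `X` and a sequence `x` in `X`, the summing multiplier space
`S(∑ xₙ) = {(aₙ) ∈ ℓ∞ : ∑ aₙ xₙ converges}` is never equal to `c`, the space of
convergent real sequences. -/
theorem stmt4 (X : Type*) [NormedAddCommGroup X] [NormedSpace ℝ X] [CompleteSpace X]
    (x : ℕ → X) :
    {a : lp (fun _ : ℕ => ℝ) ⊤ | ∃ s : X,
        Tendsto (fun m => ∑ n ∈ Finset.range m, a n • x n) atTop (𝓝 s)} ≠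
      {a : lp (fun _ : ℕ => ℝ) ⊤ | ∃ l : ℝ, Tendsto (fun n => a n) atTop (𝓝 l)} := by
  intro h
  have hone : (1 : lp (fun _ : ℕ => ℝ) ⊤) ∈
      {a : lp (fun _ : ℕ => ℝ) ⊤ | ∃ l : ℝ, Tendsto (fun n => a n) atTop (𝓝 l)} :=
    ⟨1, by simp [lp.infty_coeFn_one]⟩
  obtain ⟨s, hs⟩ := h ▸ hone
  simp only [lp.infty_coeFn_one, Pi.one_apply, one_smul] at hs
  obtain ⟨a, ha, ha_not_tendsto, hvar⟩ := exists_not_tendsto_summable_variation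
    (r := fun n => s - ∑ i ∈ range (n + 1), x i)
    (by simpa using (tendsto_const_nhds (x := s)).sub (hs.comp (tendsto_add_atTop_nat 1)))
  let b : lp (fun _ : ℕ => ℝ) ⊤ := ⟨a, memℓp_infty ⟨1, Set.forall_mem_range.2 ha⟩⟩
  have hb : b ∈ {a : lp (fun _ : ℕ => ℝ) ⊤ | ∃ s : X,
      Tendsto (fun m => ∑ n ∈ Finset.range m, a n • x n) atTop (𝓝 s)} :=
    exists_tendsto_sum_smul_of_summable_variation hs (isBoundedUnder_of ⟨1, ha⟩) hvar
  obtain ⟨l, hl⟩ := h ▸ hb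
  exact ha_not_tendsto l hl
end

section
/- Let X be a real normed space. If there exists a continuous linear operator T : ℓ∞(X) → X which is shift-invariant and satisfies T((x_n)) = lim_n x_n for every convergent sequence (x_n) ∈ c(X), then X is complete. -/
open Filter Topology

/-! For a Cauchy sequence `u`, shift invariance gives `T (u (· + k)) = T u` for every `k`, while
`T` fixes constant sequences, so `‖u k - T u‖ ≤ ‖T‖ * sup_n ‖u (n + k) - u k‖ → 0`: every Cauchy
sequence converges, to `T u`. -/

section

variable {E : Type*} [NormedAddCommGroup E]

theorem CauchySeq.memℓp_infty {u : ℕ → E} (hu : CauchySeq u) : Memℓp u ⊤ :=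
  memℓp_infty_iff.2 hu.norm_bddAbove

theorem memℓp_infty_const (x : E) : Memℓp (fun _ : ℕ => x) ⊤ :=
  memℓp_infty_iff.2 (by simp [Set.range_const])

noncomputable def lp.const (x : E) : lp (fun _ : ℕ => E) ⊤ :=
  ⟨fun _ => x, memℓp_infty_const x⟩

noncomputable def CauchySeq.tailLp {u : ℕ → E} (hu : CauchySeq u) (k : ℕ) :
    lp (fun _ : ℕ => E) ⊤ :=
  ⟨fun n => u (n + k), (hu.comp_tendsto (tendsto_add_atTop_nat k)).memℓp_infty⟩

theorem CauchySeq.apply_tailLp_eq {F : Type*} {u : ℕ → E} (hu : CauchySeq u)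
    (T : lp (fun _ : ℕ => E) ⊤ → F)
    (hshift : ∀ f g : lp (fun _ : ℕ => E) ⊤, (∀ n, g n = f (n + 1)) → T g = T f) (k : ℕ) :
    T (hu.tailLp k) = T (hu.tailLp 0) := by
  induction k with
  | zero => rfl
  | succ k ih => exact (hshift _ _ fun n => congrArg u (Nat.add_right_comm n k 1)).trans ih

theorem CauchySeq.norm_tailLp_sub_const_le {u : ℕ → E} (hu : CauchySeq u) {b : ℕ → ℝ}
    (hb₀ : ∀ n, 0 ≤ b n) (hb : ∀ n m N, N ≤ n → N ≤ m → dist (u n) (u m) ≤ b N) (k : ℕ) :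
    ‖hu.tailLp k - lp.const (u k)‖ ≤ b k :=
  lp.norm_le_of_forall_le (hb₀ k) fun n =>
    (dist_eq_norm _ _).symm.le.trans (hb _ _ _ (Nat.le_add_left k n) le_rfl)

theorem CauchySeq.tendsto_of_shift_invariant {𝕜 : Type*} [NontriviallyNormedField 𝕜]
    [NormedSpace 𝕜 E] {u : ℕ → E} (hu : CauchySeq u) (T : lp (fun _ : ℕ => E) ⊤ →L[𝕜] E)
    (hshift : ∀ f g : lp (fun _ : ℕ => E) ⊤, (∀ n, g n = f (n + 1)) → T g = T f)
    (hconst : ∀ x, T (lp.const x) = x) :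
    Tendsto u atTop (𝓝 (T (hu.tailLp 0))) := by
  obtain ⟨b, hb₀, hb, hb_lim⟩ := cauchySeq_iff_le_tendsto_0.1 hu
  have hdist (k : ℕ) : dist (u k) (T (hu.tailLp 0)) ≤ ‖T‖ * b k :=
    calc dist (u k) (T (hu.tailLp 0))
        = ‖T (hu.tailLp k - lp.const (u k))‖ := by
          rw [map_sub, hconst, hu.apply_tailLp_eq T hshift k, dist_eq_norm, norm_sub_rev]
      _ ≤ ‖T‖ * ‖hu.tailLp k - lp.const (u k)‖ := T.le_opNorm _
      _ ≤ ‖T‖ * b k := by gcongr; exact hu.norm_tailLp_sub_const_le hb₀ hb k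
  refine tendsto_iff_dist_tendsto_zero.2 (squeeze_zero (fun _ => dist_nonneg) hdist ?_)
  simpa using hb_lim.const_mul ‖T‖

end

/-- If a real normed space `X` admits a continuous linear operator `T : ℓ∞(X) → X` which is
invariant under the forward shift and extends the limit function on `c(X)`, then `X` is
complete. -/
theorem stmt5 (X : Type*) [NormedAddCommGroup X] [NormedSpace ℝ X]
    (T : lp (fun _ : ℕ => X) ⊤ →L[ℝ] X)
    (hshift : ∀ f g : lp (fun _ : ℕ => X) ⊤, (∀ n, g n = f (n + 1)) → T g = T f)
    (hlim : ∀ (f : lp (fun _ : ℕ => X) ⊤) (x : X),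
      Tendsto (fun n => f n) atTop (𝓝 x) → T f = x) :
    CompleteSpace X :=
  Metric.complete_of_cauchySeq_tendsto fun _ hu =>
    ⟨_, hu.tendsto_of_shift_invariant T hshift fun x => hlim _ x tendsto_const_nhds⟩
end

section
/- There is no Banach limit on c₀: there exists no continuous linear operator T : ℓ∞(c₀) → c₀ with ‖T‖ = 1 which is shift-invariant and satisfies T((x_n)) = lim_n x_n for every convergent sequence (x_n) of elements of c₀. -/
/-!
Let `y = T S`, where `S n` is the indicator of `{0, …, n}`. Shift invariance gives `T S⁽ᵐ⁾ = y`
for the sequence `S⁽ᵐ⁾ n = 𝟙{0, …, n + m}`, and `T` maps the constant sequence `eₘ` to `eₘ`.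
Since `‖S⁽ᵐ⁾‖ ≤ 1`, `‖S⁽ᵐ⁾ - 2 eₘ‖ ≤ 1` and `‖T‖ = 1`, the `m`-th coordinate of `y` satisfies
`|yₘ| ≤ 1` and `|yₘ - 2| ≤ 1`, so `yₘ = 1` for every `m`, and `y` is not a null sequence.
-/

open Filter Topology

open scoped ENNReal ZeroAtInfty

namespace ZeroAtInftyContinuousMap

section Norm

variable {α β : Type*} [TopologicalSpace α] [SeminormedAddCommGroup β]

theorem norm_apply_le (f : C₀(α, β)) (x : α) : ‖f x‖ ≤ ‖f‖ :=
  norm_toBCF_eq_norm (f := f) ▸ f.toBCF.norm_coe_le_norm x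

theorem norm_le_of_forall_le {f : C₀(α, β)} {C : ℝ} (hC : 0 ≤ C) (h : ∀ x, ‖f x‖ ≤ C) :
    ‖f‖ ≤ C :=
  norm_toBCF_eq_norm (f := f) ▸ (BoundedContinuousFunction.norm_le hC).2 h

end Norm

theorem eq_zero_of_forall_apply_eq {α β : Type*} [TopologicalSpace α] [NoncompactSpace α]
    [TopologicalSpace β] [Zero β] [T1Space β] {f : C₀(α, β)} {c : β} (h : ∀ x, f x = c) :
    c = 0 :=
  tendsto_const_nhds_iff.mp ((zero_at_infty f).congr h)

section Indicator

variable {α : Type*} [TopologicalSpace α] [DiscreteTopology α]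

noncomputable def finsetIndicator (s : Finset α) : C₀(α, ℝ) where
  toFun := Set.indicator s 1
  continuous_toFun := continuous_of_discreteTopology
  zero_at_infty' := by
    rw [cocompact_eq_cofinite]
    exact tendsto_const_nhds.congr' <| s.eventually_cofinite_notMem.mono fun x hx =>
      (Set.indicator_of_notMem hx _).symm

theorem finsetIndicator_apply (s : Finset α) (x : α) :
    finsetIndicator s x = Set.indicator s 1 x :=
  rfl

theorem norm_finsetIndicator_le (s : Finset α) : ‖finsetIndicator s‖ ≤ 1 :=
  norm_le_of_forall_le zero_le_one fun x => by
    by_cases hx : x ∈ s <;> simp [finsetIndicator_apply, hx]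

theorem norm_finsetIndicator_sub_two_smul_le {s t : Finset α} (hts : t ⊆ s) :
    ‖finsetIndicator s - (2 : ℝ) • finsetIndicator t‖ ≤ 1 :=
  norm_le_of_forall_le zero_le_one fun x => by
    by_cases hxt : x ∈ t
    · norm_num [finsetIndicator_apply, hxt, hts hxt]
    · by_cases hxs : x ∈ s <;> simp [finsetIndicator_apply, hxt, hxs]

end Indicator

theorem apply_eq_one_of_opNorm_le_one {E α : Type*}
    [SeminormedAddCommGroup E] [NormedSpace ℝ E] [TopologicalSpace α] {T : E →L[ℝ] C₀(α, ℝ)}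
    (hT : ‖T‖ ≤ 1) {a b : E} (ha : ‖a‖ ≤ 1) (hab : ‖a - (2 : ℝ) • b‖ ≤ 1) {x : α}
    (hb : T b x = 1) : T a x = 1 := by
  have hcoord : ∀ c : E, ‖c‖ ≤ 1 → |T c x| ≤ 1 := fun c hc =>
    calc |T c x| ≤ ‖T c‖ := norm_apply_le (T c) x
      _ ≤ 1 * ‖c‖ := T.le_of_opNorm_le hT c
      _ ≤ 1 := by rwa [one_mul]
  have h₁ := abs_le.mp (hcoord a ha)
  have h₂ := abs_le.mp (hcoord _ hab)
  simp only [map_sub, map_smul, sub_apply, smul_apply, hb, smul_eq_mul, mul_one] at h₂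
  linarith [h₁.1, h₁.2, h₂.1, h₂.2]

end ZeroAtInftyContinuousMap

open ZeroAtInftyContinuousMap

namespace lp

variable {E : Type*} [NormedAddCommGroup E]

def const_s9 (ι : Type*) (x : E) : lp (fun _ : ι => E) ∞ :=
  ⟨fun _ => x, memℓp_infty ⟨‖x‖, by rintro _ ⟨_, rfl⟩; exact le_rfl⟩⟩

theorem apply_eq_of_shift_invariant {F : Type*} {T : lp (fun _ : ℕ => E) ∞ → F}
    (hT : ∀ f g : lp (fun _ : ℕ => E) ∞, (∀ n, g n = f (n + 1)) → T g = T f)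
    {a : ℕ → lp (fun _ : ℕ => E) ∞} (ha : ∀ m n, a (m + 1) n = a m (n + 1)) (m : ℕ) :
    T (a m) = T (a 0) := by
  induction m with
  | zero => rfl
  | succ m ih => exact (hT _ _ (ha m)).trans ih

end lp

noncomputable def initialSegments (m : ℕ) : lp (fun _ : ℕ => C₀(ℕ, ℝ)) ∞ :=
  ⟨fun n => finsetIndicator (Finset.Iic (n + m)),
    memℓp_infty ⟨1, by rintro _ ⟨n, rfl⟩; exact norm_finsetIndicator_le _⟩⟩

theorem initialSegments_apply (m n : ℕ) :
    initialSegments m n = finsetIndicator (Finset.Iic (n + m)) :=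
  rfl

theorem initialSegments_succ_apply (m n : ℕ) :
    initialSegments (m + 1) n = initialSegments m (n + 1) := by
  rw [initialSegments_apply, initialSegments_apply, add_right_comm, add_assoc]

theorem norm_initialSegments_le (m : ℕ) : ‖initialSegments m‖ ≤ 1 :=
  lp.norm_le_of_forall_le zero_le_one fun _ => norm_finsetIndicator_le _

theorem norm_initialSegments_sub_two_smul_le (m : ℕ) :
    ‖initialSegments m - (2 : ℝ) • lp.const_s9 ℕ (finsetIndicator {m})‖ ≤ 1 :=
  lp.norm_le_of_forall_le zero_le_one fun _ =>
    norm_finsetIndicator_sub_two_smul_le <| by simp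

/-- There is no Banach limit on `c₀`, the space of real null sequences (realized as the
zero-at-infinity continuous functions `C₀(ℕ, ℝ)` with the sup norm). -/
theorem stmt9 :
    ¬ ∃ T : lp (fun _ : ℕ => ZeroAtInftyContinuousMap ℕ ℝ) ⊤ →L[ℝ]
        ZeroAtInftyContinuousMap ℕ ℝ,
      ‖T‖ = 1 ∧
      (∀ f g : lp (fun _ : ℕ => ZeroAtInftyContinuousMap ℕ ℝ) ⊤,
        (∀ n, g n = f (n + 1)) → T g = T f) ∧
      (∀ (f : lp (fun _ : ℕ => ZeroAtInftyContinuousMap ℕ ℝ) ⊤)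
          (x : ZeroAtInftyContinuousMap ℕ ℝ),
        Tendsto (fun n => f n) atTop (𝓝 x) → T f = x) := by
  rintro ⟨T, hT, hshift, hlim⟩
  have hconst (m : ℕ) : T (lp.const_s9 ℕ (finsetIndicator {m})) = finsetIndicator {m} :=
    hlim _ _ tendsto_const_nhds
  have hshifted (m : ℕ) : T (initialSegments m) = T (initialSegments 0) :=
    lp.apply_eq_of_shift_invariant hshift initialSegments_succ_apply m
  have hone (m : ℕ) : T (initialSegments 0) m = 1 := by
    rw [← hshifted m]
    refine apply_eq_one_of_opNorm_le_one hT.le (norm_initialSegments_le m)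
      (norm_initialSegments_sub_two_smul_le m) ?_
    simp [hconst, finsetIndicator_apply]
  exact one_ne_zero (eq_zero_of_forall_apply_eq hone)
end

section
/- Let X be a real normed space and let T : ℓ∞(X) → X be a shift-invariant continuous linear operator with ‖T‖ = 1. Then the following are equivalent: (i) there exist a surjective linear isometry S : X → X and a Banach limit φ on X with T = S ∘ φ; (ii) the map x ↦ T(𝐱), where 𝐱 denotes the constant sequence with value x, is surjective onto X and satisfies ‖T(𝐱)‖ = ‖x‖ for every x ∈ X. -/
open Filter Topology

/-! A continuous shift-invariant operator kills every null sequence `f`: it takes the same value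
on all tails of `f`, and these tend to `0` in `ℓ∞`. Hence `T f = T(𝐱)` whenever `f → x`. So if
`S : x ↦ T(𝐱)` is an onto isometry, `S⁻¹ ∘ T` is a Banach limit (of norm `‖T‖ = 1`) and `T` is `S`
composed with it; conversely `T(𝐱) = S (φ 𝐱) = S x` when `T = S ∘ φ` with `φ` a Banach limit. -/

/-- A Banach limit on a real normed space `X`: a norm-one, shift-invariant, continuous
linear operator `ℓ∞(X) → X` extending the limit function on `c(X)`. -/
def IsBanachLimit {X : Type*} [NormedAddCommGroup X] [NormedSpace ℝ X]
    (T : lp (fun _ : ℕ => X) ⊤ →L[ℝ] X) : Prop :=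
  ‖T‖ = 1 ∧
  (∀ f g : lp (fun _ : ℕ => X) ⊤, (∀ n, g n = f (n + 1)) → T g = T f) ∧
  (∀ (f : lp (fun _ : ℕ => X) ⊤) (x : X), Tendsto (fun n => f n) atTop (𝓝 x) → T f = x)

/-- The constant sequence `(x, x, x, …)` as an element of `ℓ∞(X)`. -/
def constSeq {X : Type*} [NormedAddCommGroup X] (x : X) : lp (fun _ : ℕ => X) ⊤ :=
  ⟨fun _ => x, memℓp_infty ⟨‖x‖, by rintro r ⟨n, rfl⟩; simp⟩⟩

section ConstSeq

variable {𝕜 X : Type*} [NormedField 𝕜] [NormedAddCommGroup X] [NormedSpace 𝕜 X]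

@[simp] lemma constSeq_apply (x : X) (n : ℕ) : constSeq x n = x := rfl

variable (𝕜) in
def constSeqₗ : X →ₗ[𝕜] lp (fun _ : ℕ => X) ⊤ where
  toFun := constSeq
  map_add' _ _ := rfl
  map_smul' _ _ := rfl

end ConstSeq

section Shift

variable {X : Type*} [NormedAddCommGroup X]

def seqShift (k : ℕ) (f : lp (fun _ : ℕ => X) ⊤) : lp (fun _ : ℕ => X) ⊤ :=
  ⟨fun n => f (n + k), memℓp_infty ⟨‖f‖, by
    rintro r ⟨n, rfl⟩; exact lp.norm_apply_le_norm (by simp) f (n + k)⟩⟩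

@[simp] lemma seqShift_apply (k n : ℕ) (f : lp (fun _ : ℕ => X) ⊤) :
    seqShift k f n = f (n + k) := rfl

lemma tendsto_seqShift_zero {f : lp (fun _ : ℕ => X) ⊤}
    (hf : Tendsto (fun n => f n) atTop (𝓝 0)) :
    Tendsto (fun k => seqShift k f) atTop (𝓝 0) := by
  rw [Metric.tendsto_atTop] at hf ⊢
  intro ε hε
  obtain ⟨N, hN⟩ := hf (ε / 2) (half_pos hε)
  refine ⟨N, fun k hk => ?_⟩
  have hbound : ‖seqShift k f‖ ≤ ε / 2 :=
    lp.norm_le_of_forall_le (half_pos hε).le fun n => by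
      simpa using (hN (n + k) (by omega)).le
  rw [dist_zero_right]
  linarith

variable {𝕜 Y : Type*} [NormedField 𝕜] [NormedSpace 𝕜 X]
  [NormedAddCommGroup Y] [NormedSpace 𝕜 Y]

def IsShiftInvariant (T : lp (fun _ : ℕ => X) ⊤ →L[𝕜] Y) : Prop :=
  ∀ f g : lp (fun _ : ℕ => X) ⊤, (∀ n, g n = f (n + 1)) → T g = T f

namespace IsShiftInvariant

variable {T : lp (fun _ : ℕ => X) ⊤ →L[𝕜] Y}

lemma map_seqShift (hT : IsShiftInvariant T) (k : ℕ) (f : lp (fun _ : ℕ => X) ⊤) :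
    T (seqShift k f) = T f := by
  induction k with
  | zero => rfl
  | succ k ih =>
    rw [← ih]
    exact hT _ _ fun n => by rw [seqShift_apply, seqShift_apply, add_right_comm, add_assoc]

lemma map_eq_zero_of_tendsto_zero (hT : IsShiftInvariant T) {f : lp (fun _ : ℕ => X) ⊤}
    (hf : Tendsto (fun n => f n) atTop (𝓝 0)) : T f = 0 := by
  have h := (T.continuous.tendsto 0).comp (tendsto_seqShift_zero hf)
  simp only [Function.comp_def, hT.map_seqShift, map_zero] at h
  exact tendsto_const_nhds_iff.mp h

lemma map_eq_map_constSeq_of_tendsto (hT : IsShiftInvariant T) {f : lp (fun _ : ℕ => X) ⊤}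
    {x : X} (hf : Tendsto (fun n => f n) atTop (𝓝 x)) : T f = T (constSeq x) := by
  have hnull : Tendsto (fun n => (f - constSeq x) n) atTop (𝓝 0) := by
    simpa using hf.sub_const x
  rw [← sub_eq_zero, ← map_sub]
  exact hT.map_eq_zero_of_tendsto_zero hnull

end IsShiftInvariant

end Shift

section BanachLimit

variable {X : Type*} [NormedAddCommGroup X] [NormedSpace ℝ X]

lemma IsBanachLimit.map_constSeq {φ : lp (fun _ : ℕ => X) ⊤ →L[ℝ] X} (hφ : IsBanachLimit φ)
    (x : X) : φ (constSeq x) = x :=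
  hφ.2.2 _ _ tendsto_const_nhds

lemma isBanachLimit_symm_comp {T : lp (fun _ : ℕ => X) ⊤ →L[ℝ] X} (hT : IsShiftInvariant T)
    (hnorm : ‖T‖ = 1) (S : X ≃ₗᵢ[ℝ] X) (hS : ∀ x, S x = T (constSeq x)) :
    IsBanachLimit (S.symm.toLinearIsometry.toContinuousLinearMap.comp T) := by
  refine ⟨?_, fun f g hfg => ?_, fun f x hf => ?_⟩
  · rwa [LinearIsometry.norm_toContinuousLinearMap_comp]
  · simp [hT f g hfg]
  · simp [hT.map_eq_map_constSeq_of_tendsto hf, ← hS]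

end BanachLimit

/-- Let `T : ℓ∞(X) → X` be a norm-one shift-invariant continuous linear operator. Then
`T = S ∘ φ` for some surjective linear isometry `S : X → X` and some Banach limit `φ` on
`X` if and only if `x ↦ T(𝐱)` is onto `X` and `‖T(𝐱)‖ = ‖x‖` for all `x ∈ X`. -/
theorem stmt11 (X : Type*) [NormedAddCommGroup X] [NormedSpace ℝ X]
    (T : lp (fun _ : ℕ => X) ⊤ →L[ℝ] X)
    (hshift : ∀ f g : lp (fun _ : ℕ => X) ⊤, (∀ n, g n = f (n + 1)) → T g = T f)
    (hnorm : ‖T‖ = 1) :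
    (∃ (S : X →ₗᵢ[ℝ] X) (φ : lp (fun _ : ℕ => X) ⊤ →L[ℝ] X),
        Function.Surjective S ∧ IsBanachLimit φ ∧ ∀ f, T f = S (φ f)) ↔
      (Function.Surjective (fun x : X => T (constSeq x)) ∧
        ∀ x : X, ‖T (constSeq x)‖ = ‖x‖) := by
  constructor
  · rintro ⟨S, φ, hS, hφ, hTφ⟩
    have hTconst : ∀ x, T (constSeq x) = S x := fun x => by rw [hTφ, hφ.map_constSeq]
    simp only [hTconst]
    exact ⟨hS, S.norm_map⟩
  · rintro ⟨hsurj, hiso⟩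
    let S : X ≃ₗᵢ[ℝ] X :=
      .ofSurjective ⟨T.toLinearMap ∘ₗ constSeqₗ ℝ, hiso⟩ hsurj
    refine ⟨S.toLinearIsometry, _, S.surjective,
      isBanachLimit_symm_comp hshift hnorm S fun _ => rfl, fun f => ?_⟩
    simp
end

section
/- Let X be a real normed space admitting a Banach limit and having the Bade property, i.e., the closed unit ball of X equals the closed convex hull of its set of extreme points. Then the set BL(X) of Banach limits on X is a face of the closed unit ball of the space of shift-invariant continuous linear operators ℓ∞(X) → X: if φ and ψ are shift-invariant continuous linear operators from ℓ∞(X) to X with ‖φ‖ ≤ 1 and ‖ψ‖ ≤ 1, and α ∈ (0,1) is such that α·φ + (1−α)·ψ is a Banach limit on X, then both φ and ψ are Banach limits on X. -/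
/-!
Write `ē` for the constant sequence at `e`. The Banach limit `α • φ + (1 - α) • ψ` maps `ē` to
`e`, so for an extreme point `e` of the unit ball, `e = α • φ ē + (1 - α) • ψ ē` with `φ ē` and
`ψ ē` in the unit ball forces `φ ē = ψ ē = e`. By the Bade property the extreme points span a
dense subspace, so `φ` and `ψ` fix every constant sequence. A shift-invariant operator of norm at
most one fixing the constants is a Banach limit: a convergent sequence, shifted far enough, is
uniformly close to the constant sequence at its limit.
-/

open Filter Topology

open Metric

theorem dense_span_of_closedBall_subset {E : Type*} [NormedAddCommGroup E] [NormedSpace ℝ E]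
    {s : Set E} (hs : closedBall (0 : E) 1 ⊆ closure (convexHull ℝ s)) :
    Dense (Submodule.span ℝ s : Set E) := by
  rw [Submodule.dense_iff_topologicalClosure_eq_top]
  have hball : closedBall (0 : E) 1 ⊆ (Submodule.span ℝ s).topologicalClosure :=
    hs.trans (closure_mono (convexHull_min Submodule.subset_span (Submodule.span ℝ s).convex))
  exact Submodule.eq_top_of_nonempty_interior' _
    ⟨0, interior_mono hball (mem_interior_iff_mem_nhds.mpr (closedBall_mem_nhds 0 one_pos))⟩

namespace BanachLimit

local notation "ℓ∞(" X ")" => lp (fun _ : ℕ => X) ⊤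

variable {X : Type*} [NormedAddCommGroup X]

noncomputable def shiftSeq (f : ℓ∞(X)) (k : ℕ) : ℓ∞(X) :=
  ⟨fun n => f (n + k), memℓp_infty ⟨‖f‖, by
    rintro r ⟨i, rfl⟩; exact lp.norm_apply_le_norm ENNReal.top_ne_zero f (i + k)⟩⟩

@[simp] theorem shiftSeq_apply (f : ℓ∞(X)) (k n : ℕ) : shiftSeq f k n = f (n + k) := rfl

variable [NormedSpace ℝ X] {Y : Type*} [NormedAddCommGroup Y] [NormedSpace ℝ Y]

noncomputable def constSeqL : X →L[ℝ] ℓ∞(X) :=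
  LinearMap.mkContinuous
    { toFun := fun x => ⟨fun _ => x, memℓp_infty ⟨‖x‖, by rintro r ⟨i, rfl⟩; rfl⟩⟩
      map_add' := fun _ _ => rfl
      map_smul' := fun _ _ => rfl }
    1 fun x => by simpa using lp.norm_le_of_forall_le (norm_nonneg x) fun _ => le_rfl

@[simp] theorem constSeqL_apply (x : X) (n : ℕ) : constSeqL x n = x := rfl

theorem norm_constSeqL_le : ‖(constSeqL : X →L[ℝ] ℓ∞(X))‖ ≤ 1 :=
  LinearMap.mkContinuous_norm_le _ zero_le_one _

theorem tendsto_shiftSeq {f : ℓ∞(X)} {x : X} (hf : Tendsto (fun n => f n) atTop (𝓝 x)) :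
    Tendsto (shiftSeq f) atTop (𝓝 (constSeqL x)) := by
  refine Metric.tendsto_atTop.mpr fun ε hε => ?_
  obtain ⟨N, hN⟩ := Metric.tendsto_atTop.mp hf (ε / 2) (half_pos hε)
  refine ⟨N, fun k hk => ?_⟩
  rw [dist_eq_norm]
  refine (lp.norm_le_of_forall_le (half_pos hε).le fun n => ?_).trans_lt (half_lt_self hε)
  rw [lp.coeFn_sub, Pi.sub_apply, shiftSeq_apply, constSeqL_apply, ← dist_eq_norm]
  exact (hN (n + k) (by omega)).le

def IsShiftInvariant (T : ℓ∞(X) →L[ℝ] Y) : Prop :=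
  ∀ f g : ℓ∞(X), (∀ n, g n = f (n + 1)) → T g = T f

theorem IsShiftInvariant.map_shiftSeq {T : ℓ∞(X) →L[ℝ] Y} (hT : IsShiftInvariant T)
    (f : ℓ∞(X)) : ∀ k, T (shiftSeq f k) = T f
  | 0 => rfl
  | k + 1 => (hT _ _ fun n => by simp [Nat.add_assoc, Nat.add_comm 1]).trans (hT.map_shiftSeq f k)

theorem IsShiftInvariant.map_eq_of_tendsto {T : ℓ∞(X) →L[ℝ] X} (hT : IsShiftInvariant T)
    (hconst : T.comp constSeqL = .id ℝ X) {f : ℓ∞(X)} {x : X}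
    (hf : Tendsto (fun n => f n) atTop (𝓝 x)) : T f = x := by
  have hlim := (T.continuous.tendsto _).comp (tendsto_shiftSeq hf)
  rw [← T.comp_apply, hconst] at hlim
  refine tendsto_nhds_unique ?_ hlim
  simpa only [Function.comp_def, hT.map_shiftSeq] using tendsto_const_nhds

theorem isBanachLimit_of_comp_constSeqL_eq_id [Nontrivial X] {T : ℓ∞(X) →L[ℝ] X}
    (hT : IsShiftInvariant T) (hnorm : ‖T‖ ≤ 1) (hconst : T.comp constSeqL = .id ℝ X) :
    IsBanachLimit T := by
  refine ⟨le_antisymm hnorm ?_, hT, fun f x hf => hT.map_eq_of_tendsto hconst hf⟩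
  calc (1 : ℝ) = ‖T.comp constSeqL‖ := by rw [hconst, ContinuousLinearMap.norm_id]
    _ ≤ ‖T‖ * ‖(constSeqL : X →L[ℝ] ℓ∞(X))‖ := T.opNorm_comp_le _
    _ ≤ ‖T‖ := mul_le_of_le_one_right (norm_nonneg T) norm_constSeqL_le

theorem IsBanachLimit.nontrivial {T : ℓ∞(X) →L[ℝ] X} (hT : IsBanachLimit T) : Nontrivial X := by
  by_contra h
  have : Subsingleton X := not_nontrivial_iff_subsingleton.mp h
  simpa [Subsingleton.elim T 0] using hT.1

theorem IsBanachLimit.comp_constSeqL {T : ℓ∞(X) →L[ℝ] X} (hT : IsBanachLimit T) :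
    T.comp constSeqL = .id ℝ X :=
  ContinuousLinearMap.ext fun x => hT.2.2 _ x tendsto_const_nhds

theorem map_constSeqL_eq_of_mem_extremePoints {φ ψ : ℓ∞(X) →L[ℝ] X} (hφ : ‖φ‖ ≤ 1)
    (hψ : ‖ψ‖ ≤ 1) {α : ℝ} (hα : α ∈ Set.Ioo (0 : ℝ) 1)
    (hconst : (α • φ + (1 - α) • ψ).comp constSeqL = .id ℝ X) {e : X}
    (he : e ∈ Set.extremePoints ℝ (closedBall (0 : X) 1)) :
    φ (constSeqL e) = e ∧ ψ (constSeqL e) = e := by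
  have hē : ‖constSeqL e‖ ≤ 1 :=
    (ContinuousLinearMap.le_of_opNorm_le _ norm_constSeqL_le e).trans
      (by simpa using mem_closedBall_zero_iff.mp he.1)
  have mem_ball {χ : ℓ∞(X) →L[ℝ] X} (hχ : ‖χ‖ ≤ 1) : χ (constSeqL e) ∈ closedBall (0 : X) 1 :=
    mem_closedBall_zero_iff.mpr ((χ.le_of_opNorm_le_of_le hχ hē).trans_eq (one_mul 1))
  refine (mem_extremePoints.mp he).2 _ (mem_ball hφ) _ (mem_ball hψ)
    ⟨α, 1 - α, hα.1, sub_pos.mpr hα.2, add_sub_cancel α 1, ?_⟩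
  simpa using congr($hconst e)

end BanachLimit

open BanachLimit in
theorem stmt12_general (X : Type*) [NormedAddCommGroup X] [NormedSpace ℝ X]
    (hBade : Metric.closedBall (0 : X) 1 =
      closure (convexHull ℝ (Set.extremePoints ℝ (Metric.closedBall (0 : X) 1))))
    (φ ψ : lp (fun _ : ℕ => X) ⊤ →L[ℝ] X)
    (hφshift : ∀ f g : lp (fun _ : ℕ => X) ⊤, (∀ n, g n = f (n + 1)) → φ g = φ f)
    (hψshift : ∀ f g : lp (fun _ : ℕ => X) ⊤, (∀ n, g n = f (n + 1)) → ψ g = ψ f)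
    (hφnorm : ‖φ‖ ≤ 1) (hψnorm : ‖ψ‖ ≤ 1)
    (α : ℝ) (hα : α ∈ Set.Ioo (0 : ℝ) 1)
    (hconv : IsBanachLimit (α • φ + (1 - α) • ψ)) :
    IsBanachLimit φ ∧ IsBanachLimit ψ := by
  have := hconv.nontrivial
  have hext e (he : e ∈ Set.extremePoints ℝ (closedBall (0 : X) 1)) :=
    map_constSeqL_eq_of_mem_extremePoints hφnorm hψnorm hα hconv.comp_constSeqL he
  have hdense := dense_span_of_closedBall_subset hBade.le
  exact ⟨isBanachLimit_of_comp_constSeqL_eq_id hφshift hφnorm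
      (ContinuousLinearMap.ext_on hdense fun e he => (hext e he).1),
    isBanachLimit_of_comp_constSeqL_eq_id hψshift hψnorm
      (ContinuousLinearMap.ext_on hdense fun e he => (hext e he).2)⟩

/-- If `X` admits a Banach limit and has the Bade property (its closed unit ball is the
closed convex hull of its extreme points), then the set of Banach limits on `X` is a face
of the closed unit ball of the space of shift-invariant continuous linear operators
`ℓ∞(X) → X`. -/
theorem stmt12 (X : Type*) [NormedAddCommGroup X] [NormedSpace ℝ X]
    (hBL : ∃ φ₀ : lp (fun _ : ℕ => X) ⊤ →L[ℝ] X, IsBanachLimit φ₀)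
    (hBade : Metric.closedBall (0 : X) 1 =
      closure (convexHull ℝ (Set.extremePoints ℝ (Metric.closedBall (0 : X) 1))))
    (φ ψ : lp (fun _ : ℕ => X) ⊤ →L[ℝ] X)
    (hφshift : ∀ f g : lp (fun _ : ℕ => X) ⊤, (∀ n, g n = f (n + 1)) → φ g = φ f)
    (hψshift : ∀ f g : lp (fun _ : ℕ => X) ⊤, (∀ n, g n = f (n + 1)) → ψ g = ψ f)
    (hφnorm : ‖φ‖ ≤ 1) (hψnorm : ‖ψ‖ ≤ 1)
    (α : ℝ) (hα : α ∈ Set.Ioo (0 : ℝ) 1)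
    (hconv : IsBanachLimit (α • φ + (1 - α) • ψ)) :
    IsBanachLimit φ ∧ IsBanachLimit ψ :=
  stmt12_general X hBade φ ψ hφshift hψshift hφnorm hψnorm α hα hconv
end

section
/- If a sequence (x_n)_{n∈ℕ} in a real normed space X is weakly almost convergent to some y ∈ X, then (x_n) is bounded: sup_n ‖x_n‖ < ∞. -/
/-!
Almost convergence of a scalar sequence bounds its block sums `∑_{k ≤ p} x (n+k)` by `C (p+1)`
uniformly in `n` once `p` is large, and `x n` is the difference of two consecutive such block
sums, so every almost convergent sequence is bounded. Applied to `f ∘ x` for each functional `f`,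
this makes `(x n)` weakly bounded, hence bounded by the uniform boundedness principle on the
(complete) dual space.
-/

open Filter Topology

/-- A sequence `x` in a real normed space is almost convergent to `y` if the means
`(1/(p+1)) ∑_{k=0}^{p} x (n+k)` converge to `y` as `p → ∞`, uniformly in `n`. -/
def AlmostConvergentTo {E : Type*} [NormedAddCommGroup E] [NormedSpace ℝ E]
    (x : ℕ → E) (y : E) : Prop :=
  TendstoUniformly
    (fun (p n : ℕ) => ((p : ℝ) + 1)⁻¹ • ∑ k ∈ Finset.range (p + 1), x (n + k))
    (fun _ => y) atTop

theorem eq_sum_range_sub_sum_range_succ {E : Type*} [AddCommGroup E] (x : ℕ → E) (n p : ℕ) :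
    x n = ∑ k ∈ Finset.range (p + 2), x (n + k) - ∑ k ∈ Finset.range (p + 1), x (n + 1 + k) := by
  rw [Finset.sum_range_succ' _ (p + 1)]
  simp only [add_zero, add_assoc, add_comm 1]
  abel

section AlmostConvergent

variable {E : Type*} [NormedAddCommGroup E] [NormedSpace ℝ E] {x : ℕ → E} {y : E}

theorem AlmostConvergentTo.eventually_norm_sum_range_le (h : AlmostConvergentTo x y) :
    ∀ᶠ p in atTop, ∀ n, ‖∑ k ∈ Finset.range (p + 1), x (n + k)‖ ≤ (p + 1) * (‖y‖ + 1) := by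
  filter_upwards [Metric.tendstoUniformly_iff.mp h 1 one_pos] with p hp n
  have hmean : ‖((p : ℝ) + 1)⁻¹ • ∑ k ∈ Finset.range (p + 1), x (n + k)‖ ≤ ‖y‖ + 1 := by
    have := norm_le_norm_add_norm_sub' (((p : ℝ) + 1)⁻¹ • ∑ k ∈ Finset.range (p + 1), x (n + k)) y
    rw [← dist_eq_norm, dist_comm] at this
    linarith [hp n]
  rwa [norm_smul, norm_inv, Real.norm_of_nonneg (by positivity), inv_mul_le_iff₀ (by positivity)]
    at hmean

theorem AlmostConvergentTo.exists_norm_le (h : AlmostConvergentTo x y) :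
    ∃ C, ∀ n, ‖x n‖ ≤ C := by
  obtain ⟨p, hp⟩ := eventually_atTop.mp h.eventually_norm_sum_range_le
  refine ⟨(2 * p + 3) * (‖y‖ + 1), fun n => ?_⟩
  have hlong := hp (p + 1) (by omega) n
  have hshort := hp p le_rfl (n + 1)
  push_cast at hlong
  calc ‖x n‖
      ≤ ‖∑ k ∈ Finset.range (p + 2), x (n + k)‖ + ‖∑ k ∈ Finset.range (p + 1), x (n + 1 + k)‖ := by
        rw [eq_sum_range_sub_sum_range_succ x n p]
        exact norm_sub_le _ _
    _ ≤ (2 * p + 3) * (‖y‖ + 1) := by linarith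

end AlmostConvergent

theorem exists_norm_le_of_forall_exists_norm_dual_le {𝕜 E ι : Type*} [RCLike 𝕜]
    [NormedAddCommGroup E] [NormedSpace 𝕜 E] {x : ι → E}
    (h : ∀ f : StrongDual 𝕜 E, ∃ C, ∀ i, ‖f (x i)‖ ≤ C) : ∃ C, ∀ i, ‖x i‖ ≤ C := by
  obtain ⟨C, hC⟩ := banach_steinhaus (g := fun i => NormedSpace.inclusionInDoubleDual 𝕜 E (x i)) h
  exact ⟨C, fun i => (NormedSpace.inclusionInDoubleDualLi 𝕜).norm_map (x i) ▸ hC i⟩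

/-- A weakly almost convergent sequence in a real normed space is bounded. -/
theorem stmt13 (X : Type*) [NormedAddCommGroup X] [NormedSpace ℝ X]
    (x : ℕ → X) (y : X)
    (h : ∀ f : X →L[ℝ] ℝ, AlmostConvergentTo (fun n => f (x n)) (f y)) :
    ∃ C : ℝ, ∀ n, ‖x n‖ ≤ C :=
  exists_norm_le_of_forall_exists_norm_dual_le fun f => (h f).exists_norm_le
end

section
/- Let (x_n)_{n∈ℕ} be a Cauchy sequence in a real normed space X. Then (x_n) is convergent if and only if it is almost convergent; moreover, in that case the limit of (x_n) coincides with its almost limit. -/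
/-!
If `x → l`, then `‖x m - l‖ ≤ C` for all `m` and `≤ ε` from some `N` on, so every block of
`p + 1` consecutive terms has mean within `N C / (p + 1) + ε` of `l`, uniformly in the
starting index. Conversely, if `x` is Cauchy, then from some `N` on all terms lie in a small
ball around `x n`, hence so does any block mean starting at `n ≥ N`; choosing `p` with all block
means close to the almost limit `y` puts `x n` close to `y`.
-/

open Filter Topology

open Finset

section BlockMean

variable {E : Type*} [NormedAddCommGroup E] [NormedSpace ℝ E]

noncomputable def blockMean (x : ℕ → E) (p n : ℕ) : E :=
  ((p : ℝ) + 1)⁻¹ • ∑ k ∈ range (p + 1), x (n + k)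

theorem almostConvergentTo_iff_tendstoUniformly_blockMean {x : ℕ → E} {y : E} :
    AlmostConvergentTo x y ↔ TendstoUniformly (blockMean x) (fun _ => y) atTop :=
  Iff.rfl

theorem blockMean_sub_const (x : ℕ → E) (z : E) (p n : ℕ) :
    blockMean x p n - z = blockMean (fun m => x m - z) p n := by
  have hp : ((p : ℝ) + 1) ≠ 0 := by positivity
  rw [blockMean, blockMean, sum_sub_distrib, smul_sub, sum_const, card_range,
    ← Nat.cast_smul_eq_nsmul ℝ, smul_smul, Nat.cast_succ, inv_mul_cancel₀ hp, one_smul]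

theorem norm_blockMean_le (x : ℕ → E) (p n : ℕ) :
    ‖blockMean x p n‖ ≤ blockMean (fun m => ‖x m‖) p n := by
  rw [blockMean, blockMean, norm_smul, smul_eq_mul, Real.norm_of_nonneg (by positivity)]
  gcongr
  exact norm_sum_le _ _

theorem norm_blockMean_sub_le (x : ℕ → E) (z : E) (p n : ℕ) :
    ‖blockMean x p n - z‖ ≤ blockMean (fun m => ‖x m - z‖) p n :=
  blockMean_sub_const x z p n ▸ norm_blockMean_le _ p n

theorem blockMean_le_of_forall_le {a : ℕ → ℝ} {δ : ℝ} {p n : ℕ}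
    (h : ∀ k ≤ p, a (n + k) ≤ δ) : blockMean a p n ≤ δ := by
  have hsum : ∑ k ∈ range (p + 1), a (n + k) ≤ ((p : ℝ) + 1) * δ := by
    simpa using sum_le_card_nsmul (range (p + 1)) _ δ fun k hk =>
      h k (Nat.lt_succ_iff.1 (mem_range.1 hk))
  rw [blockMean, smul_eq_mul, inv_mul_le_iff₀ (by positivity)]
  exact hsum

theorem blockMean_le_of_tail_le {a : ℕ → ℝ} {C ε : ℝ} {N : ℕ} (ha : ∀ m, 0 ≤ a m)
    (hC : ∀ m, a m ≤ C) (hε : ∀ m ≥ N, a m ≤ ε) (p n : ℕ) :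
    blockMean a p n ≤ N * C / ((p : ℝ) + 1) + ε := by
  have hhead : ∑ k ∈ range N, a (n + k) ≤ N * C := by
    simpa using sum_le_card_nsmul (range N) _ C fun k _ => hC (n + k)
  have htail : ∑ k ∈ range (p + 1), a (n + N + k) ≤ ((p : ℝ) + 1) * ε := by
    simpa using sum_le_card_nsmul (range (p + 1)) _ ε fun k _ => hε (n + N + k) (by omega)
  have hsum : ∑ k ∈ range (p + 1), a (n + k) ≤ N * C + ((p : ℝ) + 1) * ε :=
    calc ∑ k ∈ range (p + 1), a (n + k)
        ≤ ∑ k ∈ range (N + (p + 1)), a (n + k) :=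
          sum_le_sum_of_subset_of_nonneg (range_subset_range.2 (by omega)) fun _ _ _ => ha _
      _ = ∑ k ∈ range N, a (n + k) + ∑ k ∈ range (p + 1), a (n + N + k) := by
          simp only [sum_range_add, add_assoc]
      _ ≤ N * C + ((p : ℝ) + 1) * ε := add_le_add hhead htail
  have hp : (0 : ℝ) < (p : ℝ) + 1 := by positivity
  rw [blockMean, smul_eq_mul, inv_mul_le_iff₀ hp]
  calc _ ≤ N * C + ((p : ℝ) + 1) * ε := hsum
    _ = ((p : ℝ) + 1) * (N * C / ((p : ℝ) + 1) + ε) := by field_simp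

theorem Filter.Tendsto.almostConvergentTo {x : ℕ → E} {l : E} (h : Tendsto x atTop (𝓝 l)) :
    AlmostConvergentTo x l := by
  set a : ℕ → ℝ := fun m => ‖x m - l‖
  have ha : Tendsto a atTop (𝓝 0) := tendsto_iff_norm_sub_tendsto_zero.1 h
  obtain ⟨C, hC⟩ := ha.bddAbove_range
  rw [almostConvergentTo_iff_tendstoUniformly_blockMean, Metric.tendstoUniformly_iff]
  intro ε hε
  obtain ⟨N, hN⟩ := (ha.eventually (ge_mem_nhds (half_pos hε))).exists_forall_of_atTop
  have hhead : Tendsto (fun p : ℕ => N * C / ((p : ℝ) + 1)) atTop (𝓝 0) := by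
    simpa only [mul_one_div, mul_zero] using
      tendsto_one_div_add_atTop_nhds_zero_nat.const_mul ((N : ℝ) * C)
  filter_upwards [hhead.eventually (gt_mem_nhds (half_pos hε))] with p hp n
  rw [dist_comm, dist_eq_norm]
  calc ‖blockMean x p n - l‖ ≤ blockMean a p n := norm_blockMean_sub_le x l p n
    _ ≤ N * C / ((p : ℝ) + 1) + ε / 2 :=
      blockMean_le_of_tail_le (fun _ => norm_nonneg _) (fun m => hC ⟨m, rfl⟩) hN p n
    _ < ε := by linarith

theorem CauchySeq.tendsto_of_almostConvergentTo {x : ℕ → E} {y : E} (hx : CauchySeq x)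
    (hy : AlmostConvergentTo x y) : Tendsto x atTop (𝓝 y) := by
  rw [Metric.tendsto_atTop]
  intro ε hε
  obtain ⟨N, hN⟩ := Metric.cauchySeq_iff.1 hx (ε / 2) (half_pos hε)
  obtain ⟨p, hp⟩ := (Metric.tendstoUniformly_iff.1 hy (ε / 2) (half_pos hε)).exists
  refine ⟨N, fun n hn => ?_⟩
  have hmean : ‖blockMean x p n - x n‖ ≤ ε / 2 :=
    (norm_blockMean_sub_le x (x n) p n).trans <| blockMean_le_of_forall_le fun k _ =>
      (dist_eq_norm (x (n + k)) (x n) ▸ hN (n + k) (by omega) n hn).le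
  have hclose : dist y (blockMean x p n) < ε / 2 := hp n
  calc dist (x n) y ≤ dist (x n) (blockMean x p n) + dist y (blockMean x p n) :=
        dist_triangle_right _ _ _
    _ < ε := by rw [dist_comm, dist_eq_norm]; linarith

end BlockMean

/-- For a Cauchy sequence in a real normed space, convergence and almost convergence are
equivalent, and in that case the limit coincides with the almost limit. -/
theorem stmt14 (X : Type*) [NormedAddCommGroup X] [NormedSpace ℝ X]
    (x : ℕ → X) (hx : CauchySeq x) :
    ((∃ l : X, Tendsto x atTop (𝓝 l)) ↔ (∃ y : X, AlmostConvergentTo x y)) ∧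
    (∀ l y : X, Tendsto x atTop (𝓝 l) → AlmostConvergentTo x y → l = y) :=
  ⟨⟨fun ⟨l, hl⟩ => ⟨l, hl.almostConvergentTo⟩,
    fun ⟨y, hy⟩ => ⟨y, hx.tendsto_of_almostConvergentTo hy⟩⟩,
   fun _ _ hl hy => tendsto_nhds_unique hl (hx.tendsto_of_almostConvergentTo hy)⟩
end

section
/- Let X be a real normed space and let (x_n)_{n∈ℕ} be a bounded sequence in X. Then (x_n) is almost convergent to 0 if and only if T((x_n)) = 0 for every shift-invariant continuous linear operator T : ℓ∞(X) → X. -/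
/-!
Write `S` for the left shift on `ℓ∞(X)`. The Cesàro means in the definition of almost
convergence are the Birkhoff averages `Aₙ = n⁻¹ ∑_{k<n} Sᵏ` of `S`, and almost convergence of `f`
to `0` says `Aₙ f → 0` in `ℓ∞(X)`. A shift-invariant `T` satisfies `T ∘ Aₙ = T`, so it kills such
an `f`. Conversely, `Aₙ (S u - u) → 0` for every `u` and the `Aₙ` are uniformly bounded, so
`Aₙ f → 0` on the closure of the range of `S - 1`. If `f` is not almost convergent to `0`, it lies
outside this closed subspace, and Hahn–Banach yields a functional `φ` vanishing on the range of
`S - 1` with `φ f ≠ 0`; then `T = φ(·) • f n`, for any `n` with `f n ≠ 0`, is shift-invariant and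
`T f ≠ 0`.
-/

open Filter Topology
open scoped lp ENNReal

theorem Submodule.exists_le_ker_of_notMem_closure {E : Type*} [TopologicalSpace E]
    [AddCommGroup E] [IsTopologicalAddGroup E] [Module ℝ E] [ContinuousSMul ℝ E]
    [LocallyConvexSpace ℝ E] {p : Submodule ℝ E} {x : E} (hx : x ∉ closure (p : Set E)) :
    ∃ φ : StrongDual ℝ E, φ x ≠ 0 ∧ p ≤ φ.ker := by
  obtain ⟨φ, u, hφu, huφ⟩ :=
    geometric_hahn_banach_closed_point p.convex.closure isClosed_closure hx
  have hu : 0 < u := by simpa using hφu 0 (subset_closure p.zero_mem)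
  refine ⟨φ, (hu.trans huφ).ne', fun y hy => LinearMap.mem_ker.2 ?_⟩
  change φ y = 0
  -- a linear functional bounded above on a subspace vanishes on it
  by_contra hφy
  have := hφu ((u / φ y) • y) (subset_closure (p.smul_mem _ hy))
  rw [map_smul, smul_eq_mul, div_mul_cancel₀ _ hφy] at this
  exact this.false

theorem ContinuousLinearMap.tendsto_birkhoffAverage_of_mem_closure_range_sub_one {E : Type*}
    [NormedAddCommGroup E] [NormedSpace ℝ E] (f : E →L[ℝ] E) (hf : LipschitzWith 1 f) {x : E}
    (hx : x ∈ closure ((f - 1).range : Set E)) :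
    Tendsto (birkhoffAverage ℝ f _root_.id · x) atTop (𝓝 0) := by
  refine closure_minimal ?_
    (isClosed_setOfPred_tendsto_birkhoffAverage ℝ hf uniformContinuous_id continuous_const) hx
  rintro _ ⟨y, rfl⟩
  -- the averages of `f y - y` telescope to `(f^[n] y - y) / n`, and the orbit of `y` is bounded
  have hbdd : Bornology.IsBounded (Set.range (_root_.id <| f^[·] y)) := by
    refine isBounded_iff_forall_norm_le.2 ⟨‖y‖, Set.forall_mem_range.2 fun n => ?_⟩
    simpa using (hf.iterate n).dist_le_mul y 0
  convert tendsto_birkhoffAverage_apply_sub_birkhoffAverage ℝ hbdd using 2 with n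
  simp [birkhoffAverage, birkhoffSum, Finset.sum_sub_distrib, smul_sub]

theorem ContinuousLinearMap.map_eq_of_tendsto_birkhoffAverage {R E F : Type*}
    [DivisionSemiring R] [CharZero R] [AddCommMonoid E] [TopologicalSpace E] [Module R E]
    [AddCommMonoid F] [TopologicalSpace F] [Module R F] [T2Space F]
    (T : E →L[R] F) {S : E → E} (hT : T ∘ S = T) {x y : E}
    (h : Tendsto (birkhoffAverage R S id · x) atTop (𝓝 y)) : T x = T y := by
  have hconst : ∀ᶠ n : ℕ in atTop, T x = T (birkhoffAverage R S id n x) := by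
    filter_upwards [eventually_ne_atTop 0] with n hn
    rw [map_birkhoffAverage R R, Function.comp_id,
      birkhoffAverage_of_comp_eq R hT (by exact_mod_cast hn)]
  exact tendsto_nhds_unique (tendsto_const_nhds.congr' hconst) ((T.continuous.tendsto y).comp h)

theorem lp.tendsto_iff_tendstoUniformly {ι α E : Type*} [NormedAddCommGroup E] {l : Filter ι}
    {F : ι → ℓ^∞(α, E)} {g : ℓ^∞(α, E)} :
    Tendsto F l (𝓝 g) ↔ TendstoUniformly (fun i a => F i a) g l := by
  rw [Metric.tendsto_nhds, Metric.tendstoUniformly_iff]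
  refine ⟨fun h ε hε => (h ε hε).mono fun i hi a => ?_, fun h ε hε => ?_⟩
  · rw [dist_comm]
    exact ((lp.lipschitzWith_one_eval ∞ a).dist_le_mul _ _).trans_lt (by simpa using hi)
  · filter_upwards [h (ε / 2) (half_pos hε)] with i hi
    refine lt_of_le_of_lt ?_ (half_lt_self hε)
    rw [dist_eq_norm]
    refine lp.norm_le_of_forall_le (half_pos hε).le fun a => ?_
    simpa [dist_eq_norm', lp.coeFn_sub] using (hi a).le

namespace lp

variable {X : Type*} [NormedAddCommGroup X] [NormedSpace ℝ X]

noncomputable def shiftLeft : ℓ^∞(ℕ, X) →L[ℝ] ℓ^∞(ℕ, X) :=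
  LinearMap.mkContinuous
    { toFun f := ⟨fun n => f (n + 1), memℓp_infty ⟨‖f‖, by
        rintro _ ⟨n, rfl⟩
        exact lp.norm_apply_le_norm ENNReal.top_ne_zero f _⟩⟩
      map_add' _ _ := rfl
      map_smul' _ _ := rfl }
    1 fun f => by
      rw [one_mul]
      exact lp.norm_le_of_forall_le (norm_nonneg f) fun n =>
        lp.norm_apply_le_norm ENNReal.top_ne_zero f _

@[simp]
theorem shiftLeft_apply (f : ℓ^∞(ℕ, X)) (n : ℕ) : shiftLeft f n = f (n + 1) := rfl

theorem lipschitzWith_one_shiftLeft : LipschitzWith 1 (shiftLeft : ℓ^∞(ℕ, X) → ℓ^∞(ℕ, X)) :=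
  ContinuousLinearMap.opNorm_le_iff_lipschitz.1 <| by
    rw [NNReal.coe_one]
    exact LinearMap.mkContinuous_norm_le _ zero_le_one _

theorem iterate_shiftLeft_apply (k : ℕ) (f : ℓ^∞(ℕ, X)) (n : ℕ) :
    shiftLeft^[k] f n = f (n + k) := by
  induction k generalizing n with
  | zero => rfl
  | succ k ih => rw [Function.iterate_succ_apply', shiftLeft_apply, ih, add_right_comm]; rfl

theorem birkhoffAverage_shiftLeft_apply (n : ℕ) (f : ℓ^∞(ℕ, X)) (m : ℕ) :
    birkhoffAverage ℝ shiftLeft id n f m = (n : ℝ)⁻¹ • ∑ k ∈ Finset.range n, f (m + k) := by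
  simp only [birkhoffAverage, birkhoffSum, lp.coeFn_smul, Pi.smul_apply, lp.coeFn_sum,
    Finset.sum_apply, id, iterate_shiftLeft_apply]

theorem almostConvergentTo_zero_iff_tendsto_birkhoffAverage (f : ℓ^∞(ℕ, X)) :
    AlmostConvergentTo (⇑f) 0 ↔ Tendsto (birkhoffAverage ℝ shiftLeft id · f) atTop (𝓝 0) := by
  rw [← tendsto_add_atTop_iff_nat 1, tendsto_iff_tendstoUniformly]
  simp only [birkhoffAverage_shiftLeft_apply, Nat.cast_succ]
  rfl

end lp

/-- A bounded sequence in a real normed space `X` is almost convergent to `0` if and only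
if it is annihilated by every shift-invariant continuous linear operator `ℓ∞(X) → X`. -/
theorem stmt18 (X : Type*) [NormedAddCommGroup X] [NormedSpace ℝ X]
    (f : lp (fun _ : ℕ => X) ⊤) :
    AlmostConvergentTo (fun n => f n) 0 ↔
      ∀ T : lp (fun _ : ℕ => X) ⊤ →L[ℝ] X,
        (∀ u v : lp (fun _ : ℕ => X) ⊤, (∀ n, v n = u (n + 1)) → T v = T u) →
        T f = 0 := by
  rw [lp.almostConvergentTo_zero_iff_tendsto_birkhoffAverage]
  constructor
  · intro hf T hT
    have hTS : T ∘ lp.shiftLeft = T := funext fun u => hT u (lp.shiftLeft u) fun n => rfl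
    simpa using T.map_eq_of_tendsto_birkhoffAverage hTS hf
  · intro hT
    by_contra hnot
    have hfM : f ∉ closure ((lp.shiftLeft - 1 : ℓ^∞(ℕ, X) →L[ℝ] ℓ^∞(ℕ, X)).range : Set _) :=
      fun h => hnot <| ContinuousLinearMap.tendsto_birkhoffAverage_of_mem_closure_range_sub_one _
        (lp.lipschitzWith_one_shiftLeft (X := X)) h
    obtain ⟨φ, hφf, hφ⟩ := Submodule.exists_le_ker_of_notMem_closure hfM
    obtain ⟨n, hn⟩ : ∃ n, f n ≠ 0 := by
      by_contra! h
      exact hφf (by rw [show f = 0 from lp.ext (funext h), map_zero])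
    refine smul_ne_zero hφf hn (hT (φ.smulRight (f n)) fun u v huv => ?_)
    have hv : v = lp.shiftLeft u := lp.ext (funext huv)
    have hφu : φ (lp.shiftLeft u - u) = 0 := hφ ⟨u, rfl⟩
    rw [map_sub, sub_eq_zero] at hφu
    simp [hv, hφu]
end

section
/- Let X be a real Banach space and (x_i)_{i∈ℕ} a sequence in X such that for every subset M ⊆ ℕ the series ∑_{i∈M} x_i is weakly almost summable, i.e., there exists y_M ∈ X such that for every continuous linear functional f on X the sequence of partial sums (∑_{i∈M, i≤n} f(x_i))_{n∈ℕ} is almost convergent to f(y_M). Then ∑ x_i is unconditionally convergent, i.e., the family (x_i)_{i∈ℕ} is summable (the net of finite partial sums ∑_{i∈F} x_i over finite F ⊆ ℕ converges in X). -/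
/-!
Testing the hypothesis on `{i | 0 ≤ f (x i)}` and on its complement gives monotone partial
sums; a monotone almost convergent sequence is bounded by its almost limit, so every scalar
series `∑ f (x i)` converges, and an almost limit of a convergent sequence is its ordinary
limit. Hence every subseries `∑_{i ∈ M} x i` converges weakly to `y_M`, and the Orlicz–Pettis
theorem remains.

All `y_M` lie in the closed span of the `x i` (Hahn–Banach), a separable Banach space. If
`∑ x i` were not unconditionally Cauchy, there would be disjoint blocks `F j` with
`‖∑_{F j} x‖ ≥ ε`. Norming functionals `f j` of these block sums have a weak-* convergent
subsequence `f j → Φ` (sequential Banach–Alaoglu). The matrix `(f i - Φ) (z j)` of the block sums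
`z j` then satisfies the hypotheses of a gliding-hump diagonal lemma, so
`(f i - Φ) (z i) → 0`; as also `Φ (z i) → 0`, this contradicts `f i (z i) = ‖z i‖ ≥ ε`.
-/

open Filter Topology

open Finset Function

namespace AlmostConvergentTo

variable {E : Type*} [NormedAddCommGroup E] [NormedSpace ℝ E]

theorem neg {a : ℕ → E} {r : E} (h : AlmostConvergentTo a r) :
    AlmostConvergentTo (-a) (-r) := by
  have := TendstoUniformly.neg h
  simp only [AlmostConvergentTo, Pi.neg_def, sum_neg_distrib, smul_neg] at this ⊢
  exact this

theorem eq_of_tendsto {a : ℕ → E} {r s : E} (h : AlmostConvergentTo a r)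
    (ha : Tendsto a atTop (𝓝 s)) : r = s := by
  refine tendsto_nhds_unique (h.tendsto_at 0) ?_
  have := ha.cesaro_smul.comp (tendsto_add_atTop_nat 1)
  simpa [Function.comp_def] using this

theorem le_of_monotone {a : ℕ → ℝ} {r : ℝ} (h : AlmostConvergentTo a r) (ha : Monotone a)
    (n : ℕ) : a n ≤ r := by
  refine ge_of_tendsto' (h.tendsto_at n) fun p => ?_
  rw [smul_eq_mul, le_inv_mul_iff₀ (by positivity)]
  have := card_nsmul_le_sum (range (p + 1)) (fun k => a (n + k)) (a n)
    fun k _ => ha (Nat.le_add_right n k)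
  simpa [mul_comm] using this

end AlmostConvergentTo

theorem hasSum_of_almostConvergentTo_sum_range {b : ℕ → ℝ} {r : ℝ} (hb : ∀ i, 0 ≤ b i)
    (h : AlmostConvergentTo (fun n => ∑ i ∈ range (n + 1), b i) r) : HasSum b r := by
  have hmono : Monotone fun n => ∑ i ∈ range n, b i :=
    fun m n hmn => sum_le_sum_of_subset_of_nonneg (range_mono hmn) fun i _ _ => hb i
  have hs : Summable b := summable_of_sum_range_le hb fun n =>
    (hmono n.le_succ).trans (h.le_of_monotone (fun m n hmn => hmono (by omega)) n)
  convert hs.hasSum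
  exact h.eq_of_tendsto (hs.hasSum.tendsto_sum_nat.comp (tendsto_add_atTop_nat 1))

theorem summable_of_forall_almostConvergentTo_indicator {b : ℕ → ℝ}
    (h : ∀ M : Set ℕ, ∃ r, AlmostConvergentTo (fun n => ∑ i ∈ range (n + 1), M.indicator b i) r) :
    Summable b := by
  set P : Set ℕ := {i | 0 ≤ b i}
  obtain ⟨r, hr⟩ := h P
  obtain ⟨s, hs⟩ := h Pᶜ
  have hP : Summable (P.indicator b) :=
    (hasSum_of_almostConvergentTo_sum_range
      (fun i => Set.indicator_apply_nonneg fun hi => hi) hr).summable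
  have hN : Summable (-Pᶜ.indicator b) := by
    refine (hasSum_of_almostConvergentTo_sum_range (r := -s) (fun i => ?_) ?_).summable
    · simpa using Set.indicator_apply_nonpos (s := Pᶜ) (f := b) (a := i)
        fun (hi : ¬ 0 ≤ b i) => (not_le.1 hi).le
    · simpa [Pi.neg_def, sum_neg_distrib] using hs.neg
  rw [← Set.indicator_self_add_compl P b]
  exact hP.add hN.of_neg

theorem HasSum.sum_finset_of_indicator_iUnion {ι β α : Type*} [AddCommMonoid α]
    [TopologicalSpace α] [ContinuousAdd α] [RegularSpace α] {F : ι → Finset β}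
    (hF : Pairwise (Disjoint on F)) {b : β → α} {s : α}
    (h : HasSum ((⋃ i, (F i : Set β)).indicator b) s) :
    HasSum (fun i => ∑ j ∈ F i, b j) s := by
  have hF' : Pairwise (Disjoint on fun i => (F i : Set β)) :=
    fun i j hij => Finset.disjoint_coe.2 (hF hij)
  rw [← hasSum_subtype_iff_indicator, ← (Set.unionEqSigmaOfDisjoint hF').symm.hasSum_iff] at h
  exact h.sigma fun i => Finset.hasSum (F i) b

theorem exists_pairwise_disjoint_le_norm_sum_of_not_summable {β E : Type*}
    [NormedAddCommGroup E] [CompleteSpace E] {x : β → E} (hx : ¬ Summable x) :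
    ∃ ε > 0, ∃ F : ℕ → Finset β, Pairwise (Disjoint on F) ∧ ∀ j, ε ≤ ‖∑ i ∈ F j, x i‖ := by
  classical
  rw [summable_iff_cauchySeq_finset, cauchySeq_finset_iff_vanishing_norm] at hx
  push Not at hx
  obtain ⟨ε, hε, hT⟩ := hx
  choose T hT_disj hT_norm using hT
  -- `U n` collects the first `n` blocks; each new block avoids all previous ones.
  let U : ℕ → Finset β := fun n => Nat.rec ∅ (fun _ s => s ∪ T s) n
  have hU : Monotone U := monotone_nat_of_le_succ fun n => subset_union_left
  refine ⟨ε, hε, fun n => T (U n), (pairwise_disjoint_on _).2 fun m n hmn => ?_,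
    fun n => hT_norm _⟩
  exact (hT_disj (U n)).symm.mono_left (subset_union_right.trans (hU hmn))

theorem abs_tsum_comp_sub_le {b : ℕ → ℝ} (hb : Summable b) {k : ℕ → ℕ} (hk : StrictMono k)
    (m : ℕ) {R : ℕ} (hR : R ≤ k (m + 2)) :
    |∑' l, b (k l) - b (k (m + 1))| ≤ ∑ j ∈ range (k m + 1), |b j| + ∑' j, |b (j + R)| := by
  have hbk : Summable fun l => b (k l) := hb.comp_injective hk.injective
  rw [← hbk.sum_add_tsum_nat_add (m + 2), sum_range_succ, add_sub_right_comm,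
    add_sub_cancel_right]
  refine (abs_add_le _ _).trans (add_le_add ?_ ?_)
  · calc |∑ l ∈ range (m + 1), b (k l)|
        ≤ ∑ l ∈ range (m + 1), |b (k l)| := abs_sum_le_sum_abs _ _
      _ = ∑ j ∈ (range (m + 1)).map ⟨k, hk.injective⟩, |b j| :=
          (sum_map (range (m + 1)) ⟨k, hk.injective⟩ fun j => |b j|).symm
      _ ≤ ∑ j ∈ range (k m + 1), |b j| := by
          refine sum_le_sum_of_subset_of_nonneg (fun j hj => ?_) fun _ _ _ => abs_nonneg _
          obtain ⟨l, hl, rfl⟩ := mem_map.1 hj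
          exact mem_range.2 <| Nat.lt_succ_of_le <| hk.monotone <|
            Nat.lt_succ_iff.1 (mem_range.1 hl)
  · have hkR : ∀ l, R ≤ k (l + (m + 2)) := fun l => hR.trans (hk.monotone (Nat.le_add_left _ _))
    have hinj : Injective fun l => k (l + (m + 2)) - R := fun u v huv => by
      have hu := hkR u
      have hv := hkR v
      have := hk.injective (show k (u + (m + 2)) = k (v + (m + 2)) by simp only at huv; omega)
      omega
    have hbk_tail : Summable fun l => |b (k (l + (m + 2)))| :=
      (summable_nat_add_iff (f := fun l => |b (k l)|) (m + 2)).2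
        (hb.abs.comp_injective hk.injective)
    calc |∑' l, b (k (l + (m + 2)))|
        ≤ ∑' l, |b (k (l + (m + 2)))| := by
          simpa only [Real.norm_eq_abs] using
            norm_tsum_le_tsum_norm (f := fun l => b (k (l + (m + 2)))) hbk_tail
      _ ≤ ∑' j, |b (j + R)| :=
          hbk_tail.tsum_le_tsum_of_inj (g := fun j => |b (j + R)|) _ hinj
            (fun _ _ => abs_nonneg _)
            (fun l => by simp only [Nat.sub_add_cancel (hkR l), le_refl])
            ((summable_nat_add_iff R).2 hb.abs)

theorem tendsto_diag_of_tendsto_tsum_comp {a : ℕ → ℕ → ℝ} (hrow : ∀ i, Summable (a i))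
    (hcol : ∀ j, Tendsto (fun i => a i j) atTop (𝓝 0))
    (hsub : ∀ k : ℕ → ℕ, StrictMono k → Tendsto (fun i => ∑' l, a i (k l)) atTop (𝓝 0)) :
    Tendsto (fun i => a i i) atTop (𝓝 0) := by
  by_contra hdiag
  obtain ⟨δ, hδ, hfreq⟩ : ∃ δ > 0, ∃ᶠ i in atTop, δ ≤ |a i i| := by
    rw [Metric.tendsto_atTop] at hdiag
    push Not at hdiag
    obtain ⟨δ, hδ, h⟩ := hdiag
    exact ⟨δ, hδ, frequently_atTop.2 fun N => by simpa [Real.dist_eq] using h N⟩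
  have hδ4 : 0 < δ / 4 := by positivity
  choose R hR using fun i =>
    ((tendsto_sum_nat_add fun j => |a i j|).eventually (gt_mem_nhds hδ4)).exists
  have hnext : ∀ n, ∃ n', n < n' ∧ R n ≤ n' ∧ ∑ j ∈ range (n + 1), |a n' j| < δ / 4 ∧
      δ ≤ |a n' n'| := by
    intro n
    have hhead : Tendsto (fun i => ∑ j ∈ range (n + 1), |a i j|) atTop (𝓝 0) := by
      simpa using tendsto_finsetSum (range (n + 1)) fun j _ => (hcol j).abs
    obtain ⟨n', hdiag, hn, hRn, hhead⟩ := (hfreq.and_eventually ((eventually_gt_atTop n).and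
      ((eventually_ge_atTop (R n)).and (hhead.eventually (gt_mem_nhds hδ4))))).exists
    exact ⟨n', hn, hRn, hhead, hdiag⟩
  choose next hnext using hnext
  -- the gliding hump: row `k (m + 1)` is small on columns up to `k m` and beyond `k (m + 2)`
  let k : ℕ → ℕ := fun m => next^[m] 0
  have hk_succ : ∀ m, k (m + 1) = next (k m) := fun m => iterate_succ_apply' next m 0
  have hk : StrictMono k := strictMono_nat_of_lt_succ fun m => hk_succ m ▸ (hnext _).1
  have hhump : ∀ m, δ / 2 ≤ |∑' l, a (k (m + 1)) (k l)| := by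
    intro m
    obtain ⟨-, -, hhead, hdiag⟩ := hnext (k m)
    rw [← hk_succ] at hhead hdiag
    have hRk : R (k (m + 1)) ≤ k (m + 2) := hk_succ (m + 1) ▸ (hnext _).2.1
    have hest := abs_tsum_comp_sub_le (hrow (k (m + 1))) hk m hRk
    have := abs_sub_abs_le_abs_sub (a (k (m + 1)) (k (m + 1))) (∑' l, a (k (m + 1)) (k l))
    rw [abs_sub_comm] at this
    linarith [hR (k (m + 1))]
  have hlim := ((hsub k hk).comp (hk.tendsto_atTop.comp (tendsto_add_atTop_nat 1))).abs
  rw [abs_zero] at hlim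
  obtain ⟨m, hm⟩ := (hlim.eventually (gt_mem_nhds (half_pos hδ))).exists
  exact (hhump m).not_gt hm

theorem Submodule.mem_of_forall_dual_eq_zero {E : Type*} [NormedAddCommGroup E]
    [NormedSpace ℝ E] {V : Submodule ℝ E} (hV : IsClosed (V : Set E)) {y : E}
    (h : ∀ f : StrongDual ℝ E, (∀ v ∈ V, f v = 0) → f y = 0) : y ∈ V := by
  by_contra hy
  obtain ⟨f, u, hfV, hfy⟩ := geometric_hahn_banach_closed_point V.convex hV hy
  have hf : ∀ v ∈ V, f v = 0 := by
    intro v hv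
    by_contra hfv
    have := hfV _ (V.smul_mem (u / f v) hv)
    rw [map_smul, smul_eq_mul, div_mul_cancel₀ _ hfv] at this
    exact lt_irrefl _ this
  have := hfV 0 V.zero_mem
  rw [map_zero] at this
  linarith [h f hf]

def WeaklySubseriesSummable {X : Type*} [NormedAddCommGroup X] [NormedSpace ℝ X]
    (x : ℕ → X) : Prop :=
  ∀ M : Set ℕ, ∃ y : X, ∀ f : StrongDual ℝ X, HasSum (M.indicator fun i => f (x i)) (f y)

theorem weaklySubseriesSummable_of_forall_almostConvergentTo {X : Type*}
    [NormedAddCommGroup X] [NormedSpace ℝ X] {x : ℕ → X}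
    (h : ∀ M : Set ℕ, ∃ y : X, ∀ f : X →L[ℝ] ℝ,
      AlmostConvergentTo (fun n => ∑ i ∈ range (n + 1), M.indicator (fun i => f (x i)) i) (f y)) :
    WeaklySubseriesSummable x := by
  intro M
  obtain ⟨y, hy⟩ := h M
  refine ⟨y, fun f => ?_⟩
  have hs : Summable fun i => f (x i) :=
    summable_of_forall_almostConvergentTo_indicator fun M' =>
      let ⟨y', hy'⟩ := h M'
      ⟨f y', hy' f⟩
  have hM := (hs.indicator M).hasSum
  rwa [(hy f).eq_of_tendsto (hM.tendsto_sum_nat.comp (tendsto_add_atTop_nat 1))]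

namespace WeaklySubseriesSummable

variable {X : Type*} [NormedAddCommGroup X] [NormedSpace ℝ X] {x : ℕ → X}

theorem exists_hasSum (h : WeaklySubseriesSummable x) :
    ∃ y, ∀ f : StrongDual ℝ X, HasSum (fun i => f (x i)) (f y) := by
  simpa using h Set.univ

theorem summable_apply (h : WeaklySubseriesSummable x) (f : StrongDual ℝ X) :
    Summable fun i => f (x i) :=
  let ⟨_, hy⟩ := h.exists_hasSum
  (hy f).summable

theorem sum_finset (h : WeaklySubseriesSummable x) {F : ℕ → Finset ℕ}
    (hF : Pairwise (Disjoint on F)) : WeaklySubseriesSummable fun j => ∑ i ∈ F j, x i := by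
  classical
  intro J
  set G : ℕ → Finset ℕ := fun j => if j ∈ J then F j else ∅
  have hG : Pairwise (Disjoint on G) := fun j j' hjj' => by
    simp only [Function.onFun, G]
    split_ifs <;> simp [hF hjj']
  obtain ⟨y, hy⟩ := h (⋃ j, (G j : Set ℕ))
  refine ⟨y, fun f => ?_⟩
  convert (hy f).sum_finset_of_indicator_iUnion hG using 1
  ext j
  by_cases hj : j ∈ J <;> simp [G, hj]

theorem comp_injective (h : WeaklySubseriesSummable x) {φ : ℕ → ℕ} (hφ : φ.Injective) :
    WeaklySubseriesSummable (x ∘ φ) := by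
  have hF : Pairwise (Disjoint on fun j => ({φ j} : Finset ℕ)) :=
    fun j j' hjj' => Finset.disjoint_singleton.2 (hφ.ne hjj')
  simpa [comp_def] using h.sum_finset hF

theorem tendsto_apply_self (h : WeaklySubseriesSummable x) {g : ℕ → StrongDual ℝ X}
    {Φ : StrongDual ℝ X} (hg : ∀ v, Tendsto (fun i => g i v) atTop (𝓝 (Φ v))) :
    Tendsto (fun i => g i (x i)) atTop (𝓝 0) := by
  have hdiag : Tendsto (fun i => (g i - Φ) (x i)) atTop (𝓝 0) := by
    refine tendsto_diag_of_tendsto_tsum_comp (fun i => h.summable_apply (g i - Φ))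
      (fun j => by simpa using (hg (x j)).sub_const (Φ (x j))) fun k hk => ?_
    obtain ⟨w, hw⟩ := (h.comp_injective hk.injective).exists_hasSum
    have hsum : ∀ i, ∑' l, (g i - Φ) (x (k l)) = (g i - Φ) w :=
      fun i => (hw (g i - Φ)).tsum_eq
    simp_rw [hsum]
    simpa using (hg w).sub_const (Φ w)
  simpa using hdiag.add (h.summable_apply Φ).tendsto_atTop_zero

theorem summable_of_separableSpace [CompleteSpace X] [TopologicalSpace.SeparableSpace X]
    (h : WeaklySubseriesSummable x) : Summable x := by
  by_contra hx
  obtain ⟨ε, hε, F, hF, hFε⟩ := exists_pairwise_disjoint_le_norm_sum_of_not_summable hx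
  set y : ℕ → X := fun j => ∑ i ∈ F j, x i
  have hy : WeaklySubseriesSummable y := h.sum_finset hF
  choose f hf_norm hf_apply using fun j =>
    exists_dual_vector ℝ (y j) ((hε.trans_le (hFε j)).ne')
  obtain ⟨Φ, -, φ, hφ, hfΦ⟩ := WeakDual.isSeqCompact_closedBall ℝ X 0 1
    (x := fun j => StrongDual.toWeakDual (f j)) fun j => by simp [hf_norm]
  have hg : ∀ v, Tendsto (fun i => f (φ i) v) atTop (𝓝 (Φ v)) := fun v =>
    ((WeakDual.eval_continuous v).tendsto Φ).comp hfΦ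
  have := (hy.comp_injective hφ.injective).tendsto_apply_self
    (Φ := WeakDual.toStrongDual Φ) hg
  simp only [comp_apply, hf_apply, RCLike.ofReal_real_eq_id, id] at this
  exact hε.not_ge (ge_of_tendsto' this fun i => hFε (φ i))

theorem restrict (h : WeaklySubseriesSummable x) {V : Submodule ℝ X}
    (hV : IsClosed (V : Set X)) (hxV : ∀ i, x i ∈ V) :
    WeaklySubseriesSummable fun i => (⟨x i, hxV i⟩ : V) := by
  intro M
  obtain ⟨y, hy⟩ := h M
  have hyV : y ∈ V := Submodule.mem_of_forall_dual_eq_zero hV fun f hf =>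
    (hy f).unique (by simp [hf _ (hxV _)])
  refine ⟨⟨y, hyV⟩, fun f => ?_⟩
  obtain ⟨g, hg, -⟩ := exists_extension_norm_eq V f
  simpa only [← hg] using hy g

theorem summable [CompleteSpace X] (h : WeaklySubseriesSummable x) : Summable x := by
  set V := (Submodule.span ℝ (Set.range x)).topologicalClosure
  have hV : IsClosed (V : Set X) := Submodule.isClosed_topologicalClosure _
  have hxV : ∀ i, x i ∈ V := fun i =>
    Submodule.le_topologicalClosure _ (Submodule.subset_span ⟨i, rfl⟩)
  have hVsep : TopologicalSpace.IsSeparable (V : Set X) := by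
    rw [Submodule.topologicalClosure_coe]
    exact (Set.countable_range x).isSeparable.span.closure
  have := hVsep.separableSpace
  simpa using ((h.restrict hV hxV).summable_of_separableSpace).mapL V.subtypeL

end WeaklySubseriesSummable

/-- Almost convergence Orlicz–Pettis theorem: if every subseries of `∑ xᵢ` in a real
Banach space is weakly almost summable, then `∑ xᵢ` is unconditionally convergent. -/
theorem stmt19 (X : Type*) [NormedAddCommGroup X] [NormedSpace ℝ X] [CompleteSpace X]
    (x : ℕ → X)
    (h : ∀ M : Set ℕ, ∃ y : X, ∀ f : X →L[ℝ] ℝ,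
      AlmostConvergentTo
        (fun n => ∑ i ∈ Finset.range (n + 1), M.indicator (fun i => f (x i)) i) (f y)) :
    Summable x :=
  (weaklySubseriesSummable_of_forall_almostConvergentTo h).summable
end
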